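/- arXiv:2203.03012 — 13 statements merged into one kernel-verified Lean document; each statement's English description precedes it below -/
import Mathlib

section
/- Let σ > 0, let n be a nonzero integer, and let λ ∈ ℝ with λ ≥ 0. Suppose (y, h) is a solution of the projected eigensystem with parameters (σ, n, λ). Then y(x) = 0 for every x ∈ [−1, 1] and h = 0. (This expresses that the operator A_n has no nonnegative eigenvalues.) -/
/-!
With `y'' = c y` and `c ≥ 0`, the flux `E = y y'` satisfies `E' = y'² + c y² ≥ 0`, so `E` is
nondecreasing. The boundary conditions give `E(1) = -σ n² λ h² ≤ 0`, hence `E ≤ 0` on `[-1, 1]`.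
Then `(y²)' = 2E ≤ 0`, so `y²` is nonincreasing from `y(-1)² = 0`, i.e. `y ≡ 0`, and
`y(1) = -σ n² h = 0` forces `h = 0`.
-/

open Set

section Interval

variable {f f' : ℝ → ℝ} {a b : ℝ}

theorem monotoneOn_Icc_of_hasDerivWithinAt_nonneg
    (hf : ∀ x ∈ Icc a b, HasDerivWithinAt f (f' x) (Icc a b) x)
    (hf' : ∀ x ∈ Ioo a b, 0 ≤ f' x) : MonotoneOn f (Icc a b) :=
  monotoneOn_of_hasDerivWithinAt_nonneg (convex_Icc a b)
    (fun x hx => (hf x hx).continuousWithinAt)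
    (fun x hx => by
      rw [interior_Icc] at hx ⊢
      exact (hf x (Ioo_subset_Icc_self hx)).mono Ioo_subset_Icc_self)
    (by rwa [interior_Icc])

theorem antitoneOn_Icc_of_hasDerivWithinAt_nonpos
    (hf : ∀ x ∈ Icc a b, HasDerivWithinAt f (f' x) (Icc a b) x)
    (hf' : ∀ x ∈ Ioo a b, f' x ≤ 0) : AntitoneOn f (Icc a b) := by
  have hneg : MonotoneOn (-f) (Icc a b) :=
    monotoneOn_Icc_of_hasDerivWithinAt_nonneg (f' := -f') (fun x hx => (hf x hx).neg)
      (fun x hx => neg_nonneg.mpr (hf' x hx))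
  exact fun x hx z hz hxz => neg_le_neg_iff.mp (hneg hx hz hxz)

end Interval

section SecondOrder

variable {y y' y'' : ℝ → ℝ} {a b : ℝ}

theorem monotoneOn_mul_deriv_of_deriv_deriv_eq_mul {c : ℝ} (hc : 0 ≤ c)
    (hy' : ∀ x ∈ Icc a b, HasDerivWithinAt y (y' x) (Icc a b) x)
    (hy'' : ∀ x ∈ Icc a b, HasDerivWithinAt y' (y'' x) (Icc a b) x)
    (hode : ∀ x ∈ Icc a b, y'' x = c * y x) :
    MonotoneOn (fun x => y x * y' x) (Icc a b) :=
  monotoneOn_Icc_of_hasDerivWithinAt_nonneg (fun x hx => (hy' x hx).mul (hy'' x hx))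
    fun x hx => by
      rw [hode x (Ioo_subset_Icc_self hx)]
      nlinarith [mul_self_nonneg (y' x), mul_nonneg hc (mul_self_nonneg (y x))]

theorem eqOn_zero_of_mul_deriv_nonpos
    (hy' : ∀ x ∈ Icc a b, HasDerivWithinAt y (y' x) (Icc a b) x)
    (hflux : ∀ x ∈ Icc a b, y x * y' x ≤ 0) (ha : y a = 0) :
    ∀ x ∈ Icc a b, y x = 0 := by
  have hanti : AntitoneOn (fun x => y x * y x) (Icc a b) :=
    antitoneOn_Icc_of_hasDerivWithinAt_nonpos (fun x hx => (hy' x hx).mul (hy' x hx))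
      fun x hx => by linarith [hflux x (Ioo_subset_Icc_self hx)]
  intro x hx
  have hle : y x * y x ≤ y a * y a :=
    hanti (left_mem_Icc.mpr (hx.1.trans hx.2)) hx hx.1
  rw [ha, mul_zero] at hle
  exact mul_self_eq_zero.mp (le_antisymm hle (mul_self_nonneg _))

end SecondOrder

theorem stmt0_general (σ : ℝ) (hσ : 0 < σ) (n : ℤ) (hn : n ≠ 0) (lam : ℝ) (hlam : 0 ≤ lam)
    (y y' y'' : ℝ → ℝ) (h : ℝ)
    (hy' : ∀ x ∈ Icc (-1:ℝ) 1, HasDerivWithinAt y (y' x) (Icc (-1:ℝ) 1) x)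
    (hy'' : ∀ x ∈ Icc (-1:ℝ) 1, HasDerivWithinAt y' (y'' x) (Icc (-1:ℝ) 1) x)
    (heq : ∀ x ∈ Icc (-1:ℝ) 1, lam * y x - y'' x + (n:ℝ)^2 * y x = 0)
    (hbc : lam * h = y' 1)
    (hbot : y (-1) = 0)
    (htop : y 1 = -σ * (n:ℝ)^2 * h) :
    (∀ x ∈ Icc (-1:ℝ) 1, y x = 0) ∧ h = 0 := by
  have hone : (1:ℝ) ∈ Icc (-1:ℝ) 1 := by norm_num
  have hmono := monotoneOn_mul_deriv_of_deriv_deriv_eq_mul (by positivity : 0 ≤ lam + (n:ℝ)^2)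
    hy' hy'' fun x hx => by linarith [heq x hx]
  have hflux_one : y 1 * y' 1 ≤ 0 := by
    rw [htop, ← hbc]
    nlinarith [mul_nonneg (mul_nonneg hσ.le (sq_nonneg (n:ℝ))) (mul_nonneg hlam (sq_nonneg h))]
  have hy := eqOn_zero_of_mul_deriv_nonpos hy'
    (fun x hx => (hmono hx hone hx.2).trans hflux_one) hbot
  refine ⟨hy, ?_⟩
  have hy_one := hy 1 hone
  rw [htop] at hy_one
  simpa [hσ.ne', hn] using hy_one

/-- The projected eigensystem (Fourier mode `n` of the linearized Stefan problem)
has no nonnegative eigenvalues: if `σ > 0`, `n ≠ 0`, `λ ≥ 0` and `(y, h)` solves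
`λ·y - y'' + n²·y = 0` on `[-1,1]`, `λ·h = y'(1)`, `y(-1) = 0`, `y(1) = -σ·n²·h`,
with `y` twice continuously differentiable on `[-1,1]`, then `y ≡ 0` on `[-1,1]` and `h = 0`. -/
theorem stmt0 (σ : ℝ) (hσ : 0 < σ) (n : ℤ) (hn : n ≠ 0) (lam : ℝ) (hlam : 0 ≤ lam)
    (y y' y'' : ℝ → ℝ) (h : ℝ)
    (hy' : ∀ x ∈ Icc (-1:ℝ) 1, HasDerivWithinAt y (y' x) (Icc (-1:ℝ) 1) x)
    (hy'' : ∀ x ∈ Icc (-1:ℝ) 1, HasDerivWithinAt y' (y'' x) (Icc (-1:ℝ) 1) x)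
    (hcont : ContinuousOn y'' (Icc (-1:ℝ) 1))
    (heq : ∀ x ∈ Icc (-1:ℝ) 1, lam * y x - y'' x + (n:ℝ)^2 * y x = 0)
    (hbc : lam * h = y' 1)
    (hbot : y (-1) = 0)
    (htop : y 1 = -σ * (n:ℝ)^2 * h) :
    (∀ x ∈ Icc (-1:ℝ) 1, y x = 0) ∧ h = 0 :=
  stmt0_general σ hσ n hn lam hlam y y' y'' h hy' hy'' heq hbc hbot htop
end

section
/- (Spectral gap) Let σ > 0, let n be a nonzero integer, and let λ ∈ ℝ. Suppose (y, h) is a solution of the projected eigensystem with parameters (σ, n, λ) which is nontrivial, i.e. y is not identically zero on [−1, 1] or h ≠ 0. Then λ ≤ −min{σ/2, 1}·n². -/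
/-!
Set `μ = λ + n²`. Multiplying `y'' = μ y` by `y` and integrating by parts, with `y(-1) = 0`,
gives the energy identity `∫ y'² + μ ∫ y² = y(1) y'(1) = -σ n² λ h²`. If
`λ > -min(σ/2, 1) n²`, then `μ > 0` and `-2λ < σ n²`, while `y(-1) = 0` and Cauchy–Schwarz
give `y(x)² ≤ 2 ∫ y'²` on `[-1, 1]`, in particular `σ² n⁴ h² = y(1)² ≤ 2 ∫ y'²`. Together
these force `h = 0`, then `∫ y'² = 0`, hence `y = 0` on `[-1, 1]`.
-/

open Set MeasureTheory

theorem integral_eq_sub_of_hasDerivWithinAt_Icc {a b c : ℝ} {f f' : ℝ → ℝ}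
    (hf : ∀ x ∈ Icc a b, HasDerivWithinAt f (f' x) (Icc a b) x)
    (hf' : ContinuousOn f' (Icc a b)) (hc : c ∈ Icc a b) :
    ∫ x in a..c, f' x = f c - f a := by
  have hac : Icc a c ⊆ Icc a b := Icc_subset_Icc le_rfl hc.2
  refine intervalIntegral.integral_eq_sub_of_hasDerivAt_of_le hc.1
    (fun x hx => (hf x (hac hx)).continuousWithinAt.mono hac) (fun x hx => ?_)
    ((hf'.mono hac).intervalIntegrable_of_Icc hc.1)
  exact (hf x (hac (Ioo_subset_Icc_self hx))).hasDerivAt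
    (Icc_mem_nhds hx.1 (hx.2.trans_le hc.2))

theorem sq_integral_le_mul_integral_sq {a b : ℝ} (hab : a ≤ b) {g : ℝ → ℝ}
    (hg : ContinuousOn g (Icc a b)) :
    (∫ x in a..b, g x) ^ 2 ≤ (b - a) * ∫ x in a..b, g x ^ 2 := by
  set J := ∫ x in a..b, g x with hJ
  have hgi : IntervalIntegrable g volume a b := hg.intervalIntegrable_of_Icc hab
  have hg2i : IntervalIntegrable (fun x => g x ^ 2) volume a b :=
    (hg.pow 2).intervalIntegrable_of_Icc hab
  have hexpand : ∫ x in a..b, ((b - a) * g x - J) ^ 2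
      = (b - a) * ((b - a) * (∫ x in a..b, g x ^ 2) - J ^ 2) := by
    have e : ∀ x, ((b - a) * g x - J) ^ 2
        = (b - a) ^ 2 * g x ^ 2 - 2 * (b - a) * J * g x + J ^ 2 := fun x => by ring
    simp only [e]
    rw [intervalIntegral.integral_add ((hg2i.const_mul _).sub (hgi.const_mul _))
        intervalIntegrable_const,
      intervalIntegral.integral_sub (hg2i.const_mul _) (hgi.const_mul _),
      intervalIntegral.integral_const_mul, intervalIntegral.integral_const_mul,
      intervalIntegral.integral_const, smul_eq_mul, ← hJ]
    ring
  have hnonneg : 0 ≤ ∫ x in a..b, ((b - a) * g x - J) ^ 2 :=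
    intervalIntegral.integral_nonneg hab fun _ _ => sq_nonneg _
  rcases hab.eq_or_lt with rfl | hlt
  · simp [J]
  · rw [hexpand] at hnonneg
    exact sub_nonneg.mp (nonneg_of_mul_nonneg_right hnonneg (sub_pos.mpr hlt))

theorem sq_le_mul_integral_deriv_sq {a b x : ℝ} {f f' : ℝ → ℝ}
    (hf : ∀ x ∈ Icc a b, HasDerivWithinAt f (f' x) (Icc a b) x)
    (hf' : ContinuousOn f' (Icc a b)) (ha : f a = 0) (hx : x ∈ Icc a b) :
    f x ^ 2 ≤ (b - a) * ∫ t in a..b, f' t ^ 2 := by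
  have hax : Icc a x ⊆ Icc a b := Icc_subset_Icc le_rfl hx.2
  calc f x ^ 2 = (∫ t in a..x, f' t) ^ 2 := by
        rw [integral_eq_sub_of_hasDerivWithinAt_Icc hf hf' hx, ha, sub_zero]
    _ ≤ (x - a) * ∫ t in a..x, f' t ^ 2 := sq_integral_le_mul_integral_sq hx.1 (hf'.mono hax)
    _ ≤ (b - a) * ∫ t in a..b, f' t ^ 2 :=
        mul_le_mul (by linarith [hx.2]) (intervalIntegral.integral_mono_interval le_rfl hx.1 hx.2
          (Filter.Eventually.of_forall fun _ => sq_nonneg _)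
          ((hf'.pow 2).intervalIntegrable_of_Icc (hx.1.trans hx.2)))
          (intervalIntegral.integral_nonneg hx.1 fun _ _ => sq_nonneg _)
          (by linarith [hx.1, hx.2])

theorem integral_deriv_sq_add_mul_integral_sq {a b μ : ℝ} {y y' y'' : ℝ → ℝ} (hab : a ≤ b)
    (hy' : ∀ x ∈ Icc a b, HasDerivWithinAt y (y' x) (Icc a b) x)
    (hy'' : ∀ x ∈ Icc a b, HasDerivWithinAt y' (y'' x) (Icc a b) x)
    (hode : ∀ x ∈ Icc a b, y'' x = μ * y x) (ha : y a = 0) :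
    (∫ x in a..b, y' x ^ 2) + μ * ∫ x in a..b, y x ^ 2 = y b * y' b := by
  have hyc : ContinuousOn y (Icc a b) := fun x hx => (hy' x hx).continuousWithinAt
  have hy'c : ContinuousOn y' (Icc a b) := fun x hx => (hy'' x hx).continuousWithinAt
  have hderiv : ∀ x ∈ Icc a b, HasDerivWithinAt (fun t => y t * y' t)
      (y' x ^ 2 + μ * y x ^ 2) (Icc a b) x := fun x hx =>
    ((hy' x hx).mul (hy'' x hx)).congr_deriv (by rw [hode x hx]; ring)
  have hcont : ContinuousOn (fun x => y' x ^ 2 + μ * y x ^ 2) (Icc a b) :=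
    (hy'c.pow 2).add ((hyc.pow 2).const_smul μ)
  have hFTC := integral_eq_sub_of_hasDerivWithinAt_Icc hderiv hcont ⟨hab, le_rfl⟩
  have hy'i : IntervalIntegrable (fun x => y' x ^ 2) volume a b :=
    (hy'c.pow 2).intervalIntegrable_of_Icc hab
  have hyi : IntervalIntegrable (fun x => y x ^ 2) volume a b :=
    (hyc.pow 2).intervalIntegrable_of_Icc hab
  rwa [intervalIntegral.integral_add hy'i (hyi.const_mul μ),
    intervalIntegral.integral_const_mul, ha, zero_mul, sub_zero] at hFTC

theorem stmt1_general (σ : ℝ) (hσ : 0 < σ) (n : ℤ) (hn : n ≠ 0) (lam : ℝ)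
    (y y' y'' : ℝ → ℝ) (h : ℝ)
    (hy' : ∀ x ∈ Icc (-1:ℝ) 1, HasDerivWithinAt y (y' x) (Icc (-1:ℝ) 1) x)
    (hy'' : ∀ x ∈ Icc (-1:ℝ) 1, HasDerivWithinAt y' (y'' x) (Icc (-1:ℝ) 1) x)
    (heq : ∀ x ∈ Icc (-1:ℝ) 1, lam * y x - y'' x + (n:ℝ)^2 * y x = 0)
    (hbc : lam * h = y' 1)
    (hbot : y (-1) = 0)
    (htop : y 1 = -σ * (n:ℝ)^2 * h)
    (hnontriv : (¬ ∀ x ∈ Icc (-1:ℝ) 1, y x = 0) ∨ h ≠ 0) :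
    lam ≤ -min (σ/2) 1 * (n:ℝ)^2 := by
  by_contra! hlam
  set N : ℝ := (n:ℝ)^2
  have hN : 0 < N := by positivity
  have hμ : 0 < lam + N := by nlinarith [min_le_right (σ/2) 1]
  have hgap : 0 < σ * N + 2 * lam := by nlinarith [min_le_left (σ/2) 1]
  have hy'c : ContinuousOn y' (Icc (-1) 1) := fun x hx => (hy'' x hx).continuousWithinAt
  have hpointwise : ∀ x ∈ Icc (-1:ℝ) 1, y x ^ 2 ≤ 2 * ∫ t in (-1:ℝ)..1, y' t ^ 2 :=
    fun x hx => by simpa [one_add_one_eq_two] using sq_le_mul_integral_deriv_sq hy' hy'c hbot hx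
  have henergy := integral_deriv_sq_add_mul_integral_sq (μ := lam + N) (by norm_num) hy' hy''
    (fun x hx => by linear_combination -heq x hx) hbot
  set E := ∫ x in (-1:ℝ)..1, y' x ^ 2
  set I := ∫ x in (-1:ℝ)..1, y x ^ 2
  have hμI : 0 ≤ (lam + N) * I :=
    mul_nonneg hμ.le (intervalIntegral.integral_nonneg (by norm_num) fun _ _ => sq_nonneg _)
  replace henergy : E + (lam + N) * I = -σ * N * lam * h ^ 2 := by
    linear_combination henergy + y' 1 * htop + σ * N * h * hbc
  have hh : h = 0 := by
    have hboundary := hpointwise 1 ⟨by norm_num, le_rfl⟩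
    rw [htop] at hboundary
    have : σ * N * (σ * N + 2 * lam) * h ^ 2 ≤ 0 := by nlinarith
    exact (sq_nonpos_iff h).mp (nonpos_of_mul_nonpos_right this (by positivity))
  have hE : E ≤ 0 := by
    rw [hh, zero_pow two_ne_zero, mul_zero] at henergy
    linarith
  have hy0 : ∀ x ∈ Icc (-1:ℝ) 1, y x = 0 := fun x hx =>
    (sq_nonpos_iff _).mp ((hpointwise x hx).trans (by linarith))
  exact hnontriv.elim (· hy0) (· hh)

/-- Spectral gap: if `σ > 0`, `n ≠ 0` and `(y, h)` is a nontrivial solution of the projected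
eigensystem `λ·y - y'' + n²·y = 0` on `[-1,1]`, `λ·h = y'(1)`, `y(-1) = 0`, `y(1) = -σ·n²·h`,
then `λ ≤ -min(σ/2, 1)·n²`. -/
theorem stmt1 (σ : ℝ) (hσ : 0 < σ) (n : ℤ) (hn : n ≠ 0) (lam : ℝ)
    (y y' y'' : ℝ → ℝ) (h : ℝ)
    (hy' : ∀ x ∈ Icc (-1:ℝ) 1, HasDerivWithinAt y (y' x) (Icc (-1:ℝ) 1) x)
    (hy'' : ∀ x ∈ Icc (-1:ℝ) 1, HasDerivWithinAt y' (y'' x) (Icc (-1:ℝ) 1) x)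
    (hcont : ContinuousOn y'' (Icc (-1:ℝ) 1))
    (heq : ∀ x ∈ Icc (-1:ℝ) 1, lam * y x - y'' x + (n:ℝ)^2 * y x = 0)
    (hbc : lam * h = y' 1)
    (hbot : y (-1) = 0)
    (htop : y 1 = -σ * (n:ℝ)^2 * h)
    (hnontriv : (¬ ∀ x ∈ Icc (-1:ℝ) 1, y x = 0) ∨ h ≠ 0) :
    lam ≤ -min (σ/2) 1 * (n:ℝ)^2 :=
  stmt1_general σ hσ n hn lam y y' y'' h hy' hy'' heq hbc hbot htop hnontriv
end

section
/- (Uniform resolvent estimate for A_n) For every θ ∈ (π/2, π) there exists a constant C > 0 with the following property: for every σ > 0, every nonzero integer n, every λ ∈ ℂ ∖ {0} with |arg λ| ≤ θ, every continuous f : [−1, 1] → ℂ, every g, h ∈ ℂ, and every y : ℝ → ℂ twice continuously differentiable on [−1, 1] satisfying λ·y(x) − y''(x) + n²·y(x) = f(x) for all x ∈ [−1, 1], λ·h = y'(1) + g, y(−1) = 0, and y(1) = −σ·n²·h, one has |λ|²·( ∫_{−1}^{1} |y(x)|² dx + σ·n²·|h|² ) ≤ C²·( ∫_{−1}^{1}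 |f(x)|² dx + σ·n²·|g|² ). -/
/-!
Testing the equation against `conj y` and integrating by parts gives the energy identity
`λ N + D = ∫ f ȳ + σ n² g h̄` with the nonnegative reals `N = ∫ |y|² + σ n² |h|²` and
`D = ∫ |y'|² + n² ∫ |y|²`. Since `|arg λ| ≤ θ < π`, adding the nonnegative real `D` to `λ N`
cannot bring it closer to `0` than `sin θ · |λ| N`, while Young's inequality with weight
`t = sin θ · |λ|` bounds the right-hand side by `(t N + G / t) / 2`, `G = ∫ |f|² + σ n² |g|²`.
Thus `t N ≤ G / t`, i.e. `C = 1 / sin θ` works.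
-/

open Set Real ComplexConjugate intervalIntegral

theorem sin_mul_norm_mul_le_norm_mul_add {z : ℂ} {θ N D : ℝ} (hθ : θ ≤ π)
    (harg : |z.arg| ≤ θ) (hN : 0 ≤ N) (hD : 0 ≤ D) :
    sin θ * (‖z‖ * N) ≤ ‖z * N + D‖ := by
  have hθ₀ : 0 ≤ θ := (abs_nonneg _).trans harg
  have hcos : cos θ ≤ cos z.arg := by
    rw [← Real.cos_abs z.arg]
    exact antitoneOn_cos ⟨abs_nonneg _, harg.trans hθ⟩ ⟨hθ₀, hθ⟩ harg
  have hsq : (sin θ * (‖z‖ * N)) ^ 2 ≤ ‖z * N + D‖ ^ 2 := by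
    have hre : (z * N + D).re = ‖z‖ * cos z.arg * N + D := by
      simp [Complex.norm_mul_cos_arg]
    have him : (z * N + D).im = ‖z‖ * sin z.arg * N := by
      simp [Complex.norm_mul_sin_arg]
    rw [Complex.sq_norm, Complex.normSq_apply, hre, him]
    have hθ' := sin_sq_add_cos_sq θ
    have harg' := sin_sq_add_cos_sq z.arg
    have hzN : 0 ≤ ‖z‖ * N := mul_nonneg (norm_nonneg z) hN
    rcases le_or_gt 0 (cos z.arg) with hc | hc
    · nlinarith [mul_nonneg (mul_nonneg hzN hc) hD, sq_nonneg (‖z‖ * N), sq_nonneg (cos θ)]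
    · -- `cos θ ≤ cos (arg z) < 0`, so the imaginary part alone is large enough
      have : sin θ ^ 2 ≤ sin z.arg ^ 2 := by nlinarith
      nlinarith [mul_le_mul_of_nonneg_left this (sq_nonneg (‖z‖ * N))]
  exact (sq_le_sq₀ (by have := sin_nonneg_of_nonneg_of_le_pi hθ₀ hθ; positivity)
    (norm_nonneg _)).1 hsq

theorem norm_mul_conj_le {t : ℝ} (ht : 0 < t) (a b : ℂ) :
    ‖a * conj b‖ ≤ (t * ‖b‖ ^ 2 + ‖a‖ ^ 2 / t) / 2 := by
  rw [norm_mul, Complex.norm_conj, le_div_iff₀ two_pos, ← sub_nonneg]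
  have : t * ‖b‖ ^ 2 + ‖a‖ ^ 2 / t - ‖a‖ * ‖b‖ * 2 = (t * ‖b‖ - ‖a‖) ^ 2 / t := by
    field_simp; ring
  rw [this]; positivity

section
variable {a b : ℝ} {f y y' y'' : ℝ → ℂ}

theorem norm_integral_mul_conj_le (hab : a ≤ b) (hf : ContinuousOn f (Icc a b))
    (hy : ContinuousOn y (Icc a b)) {t : ℝ} (ht : 0 < t) :
    ‖∫ x in a..b, f x * conj (y x)‖ ≤
      (t * (∫ x in a..b, ‖y x‖ ^ 2) + (∫ x in a..b, ‖f x‖ ^ 2) / t) / 2 := by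
  have hy2 : IntervalIntegrable (fun x ↦ ‖y x‖ ^ 2) MeasureTheory.volume a b :=
    ((continuous_norm.comp_continuousOn hy).pow 2).intervalIntegrable_of_Icc hab
  have hf2 : IntervalIntegrable (fun x ↦ ‖f x‖ ^ 2) MeasureTheory.volume a b :=
    ((continuous_norm.comp_continuousOn hf).pow 2).intervalIntegrable_of_Icc hab
  calc ‖∫ x in a..b, f x * conj (y x)‖ ≤ ∫ x in a..b, ‖f x * conj (y x)‖ :=
        norm_integral_le_integral_norm hab
    _ ≤ ∫ x in a..b, (t * ‖y x‖ ^ 2 + ‖f x‖ ^ 2 / t) / 2 := by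
        refine integral_mono_on hab ?_ ?_ fun x _ ↦ norm_mul_conj_le ht (f x) (y x)
        · exact (continuous_norm.comp_continuousOn
            (hf.mul (Complex.continuous_conj.comp_continuousOn hy))).intervalIntegrable_of_Icc hab
        · exact ((hy2.const_mul t).add (hf2.div_const t)).div_const 2
    _ = _ := by
        rw [integral_div, integral_add (hy2.const_mul t) (hf2.div_const t), integral_const_mul,
          integral_div]

theorem norm_integral_mul_conj_add_le (hab : a ≤ b) (hf : ContinuousOn f (Icc a b))
    (hy : ContinuousOn y (Icc a b)) {μ t : ℝ} (hμ : 0 ≤ μ) (ht : 0 < t) (g h : ℂ) :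
    ‖(∫ x in a..b, f x * conj (y x)) + μ * (g * conj h)‖ ≤
      (t * ((∫ x in a..b, ‖y x‖ ^ 2) + μ * ‖h‖ ^ 2) +
        ((∫ x in a..b, ‖f x‖ ^ 2) + μ * ‖g‖ ^ 2) / t) / 2 := by
  have hboundary : ‖(μ : ℂ) * (g * conj h)‖ ≤ μ * ((t * ‖h‖ ^ 2 + ‖g‖ ^ 2 / t) / 2) := by
    rw [norm_mul, Complex.norm_real, Real.norm_of_nonneg hμ]
    exact mul_le_mul_of_nonneg_left (norm_mul_conj_le ht g h) hμ
  calc _ ≤ _ := norm_add_le _ _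
    _ ≤ _ := add_le_add (norm_integral_mul_conj_le hab hf hy ht) hboundary
    _ = _ := by ring

theorem integral_deriv2_mul_conj (hab : a ≤ b)
    (hy : ∀ x ∈ Icc a b, HasDerivWithinAt y (y' x) (Icc a b) x)
    (hy' : ∀ x ∈ Icc a b, HasDerivWithinAt y' (y'' x) (Icc a b) x)
    (hy'' : ContinuousOn y'' (Icc a b)) :
    ∫ x in a..b, y'' x * conj (y x) =
      y' b * conj (y b) - y' a * conj (y a) - ((∫ x in a..b, ‖y' x‖ ^ 2 : ℝ) : ℂ) := by
  rw [← uIcc_of_le hab] at hy hy' hy''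
  have hconj : ∀ x ∈ uIcc a b,
      HasDerivWithinAt (fun x ↦ conj (y x)) (conj (y' x)) (uIcc a b) x :=
    fun x hx ↦ (hy x hx).star
  have hy'c : ContinuousOn y' (uIcc a b) := fun x hx ↦ (hy' x hx).continuousWithinAt
  have ibp := integral_mul_deriv_eq_deriv_mul_of_hasDerivWithinAt hconj hy'
    ((Complex.continuous_conj.comp_continuousOn hy'c).intervalIntegrable)
    hy''.intervalIntegrable
  simp only [mul_comm (conj _), Complex.mul_conj'] at ibp
  rw [ibp, ← integral_ofReal]
  push_cast
  rfl

theorem resolvent_energy_identity {k μ : ℝ} {lam g h : ℂ} (hab : a ≤ b)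
    (hy : ∀ x ∈ Icc a b, HasDerivWithinAt y (y' x) (Icc a b) x)
    (hy' : ∀ x ∈ Icc a b, HasDerivWithinAt y' (y'' x) (Icc a b) x)
    (hy'' : ContinuousOn y'' (Icc a b))
    (heq : ∀ x ∈ Icc a b, lam * y x - y'' x + k * y x = f x)
    (hbc : lam * h = y' b + g) (ha : y a = 0) (hb : y b = -μ * h) :
    lam * (((∫ x in a..b, ‖y x‖ ^ 2) + μ * ‖h‖ ^ 2 : ℝ) : ℂ) +
        (((∫ x in a..b, ‖y' x‖ ^ 2) + k * ∫ x in a..b, ‖y x‖ ^ 2 : ℝ) : ℂ) =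
      (∫ x in a..b, f x * conj (y x)) + μ * (g * conj h) := by
  have hyc : ContinuousOn y (Icc a b) := fun x hx ↦ (hy x hx).continuousWithinAt
  have hy2 : IntervalIntegrable (fun x ↦ ((‖y x‖ ^ 2 : ℝ) : ℂ)) MeasureTheory.volume a b :=
    (Complex.continuous_ofReal.comp_continuousOn
      ((continuous_norm.comp_continuousOn hyc).pow 2)).intervalIntegrable_of_Icc hab
  have hy''y : IntervalIntegrable (fun x ↦ y'' x * conj (y x)) MeasureTheory.volume a b :=
    (hy''.mul (Complex.continuous_conj.comp_continuousOn hyc)).intervalIntegrable_of_Icc hab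
  have hsplit : ∫ x in a..b, f x * conj (y x) =
      lam * (∫ x in a..b, ((‖y x‖ ^ 2 : ℝ) : ℂ)) - (∫ x in a..b, y'' x * conj (y x)) +
        k * ∫ x in a..b, ((‖y x‖ ^ 2 : ℝ) : ℂ) := by
    rw [← integral_const_mul, ← integral_const_mul, ← integral_sub (hy2.const_mul _) hy''y,
      ← integral_add ((hy2.const_mul _).sub hy''y) (hy2.const_mul _)]
    refine integral_congr fun x hx ↦ ?_
    rw [uIcc_of_le hab] at hx
    simp only [← heq x hx, Complex.ofReal_pow, ← Complex.mul_conj']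
    ring
  rw [hsplit, integral_deriv2_mul_conj hab hy hy' hy'', ha, hb, integral_ofReal]
  simp only [map_neg, map_mul, Complex.conj_ofReal, map_zero, Complex.ofReal_add,
    Complex.ofReal_mul, Complex.ofReal_pow, ← Complex.mul_conj']
  linear_combination (μ * conj h) * hbc

end

/-- Uniform resolvent estimate for the projected operators `A_n`: for every sector angle
`θ ∈ (π/2, π)` there is a constant `C > 0`, independent of `σ > 0`, of the nonzero frequency
`n` and of `λ ≠ 0` with `|arg λ| ≤ θ`, such that any solution `(y, h)` of the resolvent problem
`λ·y - y'' + n²·y = f` on `[-1,1]`, `λ·h = y'(1) + g`, `y(-1) = 0`, `y(1) = -σ·n²·h`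
satisfies `|λ|²·(∫|y|² + σn²|h|²) ≤ C²·(∫|f|² + σn²|g|²)`. -/
theorem stmt2 (θ : ℝ) (hθ : θ ∈ Set.Ioo (Real.pi / 2) Real.pi) :
    ∃ C > (0:ℝ), ∀ (σ : ℝ), 0 < σ → ∀ (n : ℤ), n ≠ 0 →
      ∀ (lam : ℂ), lam ≠ 0 → |lam.arg| ≤ θ →
      ∀ (f : ℝ → ℂ), ContinuousOn f (Icc (-1:ℝ) 1) →
      ∀ (g h : ℂ) (y y' y'' : ℝ → ℂ),
      (∀ x ∈ Icc (-1:ℝ) 1, HasDerivWithinAt y (y' x) (Icc (-1:ℝ) 1) x) →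
      (∀ x ∈ Icc (-1:ℝ) 1, HasDerivWithinAt y' (y'' x) (Icc (-1:ℝ) 1) x) →
      ContinuousOn y'' (Icc (-1:ℝ) 1) →
      (∀ x ∈ Icc (-1:ℝ) 1, lam * y x - y'' x + (n:ℂ)^2 * y x = f x) →
      lam * h = y' 1 + g →
      y (-1) = 0 →
      y 1 = -(σ:ℂ) * (n:ℂ)^2 * h →
      ‖lam‖ ^ 2 *
          ((∫ x in (-1:ℝ)..1, ‖y x‖ ^ 2) + σ * (n:ℝ)^2 * ‖h‖ ^ 2)
        ≤ C^2 *
          ((∫ x in (-1:ℝ)..1, ‖f x‖ ^ 2) + σ * (n:ℝ)^2 * ‖g‖ ^ 2) := by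
  have hsin : 0 < sin θ := sin_pos_of_pos_of_lt_pi (by linarith [hθ.1, pi_pos]) hθ.2
  refine ⟨1 / sin θ, by positivity, ?_⟩
  intro σ hσ n _ lam hlam harg f hf g h y y' y'' hy hy' hy'' heq hbc ha hb
  have energy := resolvent_energy_identity (k := (n : ℝ) ^ 2) (μ := σ * (n : ℝ) ^ 2)
    (by norm_num) hy hy' hy'' (fun x hx ↦ by push_cast; exact heq x hx) hbc ha
    (by rw [hb]; push_cast; ring)
  set N := (∫ x in (-1:ℝ)..1, ‖y x‖ ^ 2) + σ * (n : ℝ) ^ 2 * ‖h‖ ^ 2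
  set G := (∫ x in (-1:ℝ)..1, ‖f x‖ ^ 2) + σ * (n : ℝ) ^ 2 * ‖g‖ ^ 2
  have hy2 : 0 ≤ ∫ x in (-1:ℝ)..1, ‖y x‖ ^ 2 :=
    integral_nonneg (by norm_num) fun x _ ↦ by positivity
  set D := (∫ x in (-1:ℝ)..1, ‖y' x‖ ^ 2) + (n : ℝ) ^ 2 * ∫ x in (-1:ℝ)..1, ‖y x‖ ^ 2
  have hsector : sin θ * (‖lam‖ * N) ≤ ‖lam * N + D‖ :=
    sin_mul_norm_mul_le_norm_mul_add hθ.2.le harg (by positivity)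
      (add_nonneg (integral_nonneg (by norm_num) fun x _ ↦ by positivity) (by positivity))
  set t := sin θ * ‖lam‖
  have ht : 0 < t := by positivity
  have hyoung : ‖lam * N + D‖ ≤ (t * N + G / t) / 2 := energy ▸
    norm_integral_mul_conj_add_le (by norm_num) hf
      (fun x hx ↦ (hy x hx).continuousWithinAt) (by positivity) ht g h
  have hbound : t * N * t ≤ G := by
    rw [← le_div_iff₀ ht]
    linarith [hsector.trans hyoung, mul_assoc (sin θ) ‖lam‖ N]
  rw [one_div, inv_pow, ← div_eq_inv_mul, le_div_iff₀ (by positivity)]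
  linarith [show t * N * t = ‖lam‖ ^ 2 * N * sin θ ^ 2 by ring]
end

section
/- (Resolvent estimate for the adjoint system) Let σ > 0, let n be a nonzero integer, and let λ > 0. Suppose ζ : ℝ → ℝ is twice continuously differentiable on [−1, 1], ℓ ∈ ℝ, f : [−1, 1] → ℝ is continuous, and g ∈ ℝ satisfy λ·ζ(x) − ζ''(x) + n²·ζ(x) = f(x) for all x ∈ [−1, 1], λ·ℓ + σ·n²·ζ'(1) = g, ζ(−1) = 0, and ζ(1) = ℓ. Then λ²·( ∫_{−1}^{1} ζ(x)² dx + ℓ²/(σ·n²) ) ≤ ∫_{−1}^{1} f(x)² dx + g²/(σ·n²). -/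
open Set

/-! Testing `λζ - ζ'' + n²ζ = f` against `ζ` and integrating by parts, the boundary term
`ζ'(1) ζ(1)` becomes `(g - λℓ) ℓ / (σn²)` by the boundary condition. Dropping the nonnegative terms
`n² ∫ζ²` and `∫ζ'²`, the weighted energy `E = ∫ζ² + ℓ²/(σn²)` of `(ζ, ℓ)` satisfies
`λ E ≤ ∫fζ + gℓ/(σn²)`. Young's inequality `2λxy ≤ x² + λ²y²` on both terms of the right-hand side
then gives `2λ² E ≤ ∫f² + g²/(σn²) + λ² E`. -/

theorem integral_mul_eq_of_sub_deriv2_eq {a b c : ℝ} {ζ ζ' ζ'' f : ℝ → ℝ} (hab : a ≤ b)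
    (hζ' : ∀ x ∈ Icc a b, HasDerivWithinAt ζ (ζ' x) (Icc a b) x)
    (hζ'' : ∀ x ∈ Icc a b, HasDerivWithinAt ζ' (ζ'' x) (Icc a b) x)
    (hcont : ContinuousOn ζ'' (Icc a b))
    (heq : ∀ x ∈ Icc a b, c * ζ x - ζ'' x = f x) :
    ∫ x in a..b, f x * ζ x
      = c * (∫ x in a..b, ζ x ^ 2) + (∫ x in a..b, ζ' x ^ 2) - ζ' b * ζ b + ζ' a * ζ a := by
  rw [← uIcc_of_le hab] at hζ' hζ'' hcont heq
  have hcζ : ContinuousOn ζ (uIcc a b) := fun x hx ↦ (hζ' x hx).continuousWithinAt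
  have hcζ' : ContinuousOn ζ' (uIcc a b) := fun x hx ↦ (hζ'' x hx).continuousWithinAt
  have by_parts : ∫ x in a..b, ζ x * ζ'' x
      = ζ b * ζ' b - ζ a * ζ' a - ∫ x in a..b, ζ' x * ζ' x :=
    intervalIntegral.integral_mul_deriv_eq_deriv_mul_of_hasDerivWithinAt hζ' hζ''
      hcζ'.intervalIntegrable hcont.intervalIntegrable
  have hζ2 : IntervalIntegrable (fun x ↦ ζ x ^ 2) MeasureTheory.volume a b :=
    (hcζ.pow 2).intervalIntegrable
  have hζζ'' : IntervalIntegrable (fun x ↦ ζ x * ζ'' x) MeasureTheory.volume a b :=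
    (hcζ.mul hcont).intervalIntegrable
  calc ∫ x in a..b, f x * ζ x = ∫ x in a..b, c * ζ x ^ 2 - ζ x * ζ'' x :=
        intervalIntegral.integral_congr fun x hx ↦ by
          simp only [← heq x hx]
          ring
    _ = c * (∫ x in a..b, ζ x ^ 2) + (∫ x in a..b, ζ' x ^ 2) - ζ' b * ζ b + ζ' a * ζ a := by
        rw [intervalIntegral.integral_sub (hζ2.const_mul c) hζζ'',
          intervalIntegral.integral_const_mul, by_parts]
        simp only [← sq]
        ring

theorem two_mul_mul_integral_mul_le {a b : ℝ} (c : ℝ) {u v : ℝ → ℝ} (hab : a ≤ b)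
    (hu : ContinuousOn u (Icc a b)) (hv : ContinuousOn v (Icc a b)) :
    2 * c * ∫ x in a..b, u x * v x ≤ (∫ x in a..b, u x ^ 2) + c ^ 2 * ∫ x in a..b, v x ^ 2 := by
  rw [← uIcc_of_le hab] at hu hv
  have hu2 : IntervalIntegrable (fun x ↦ u x ^ 2) MeasureTheory.volume a b :=
    (hu.pow 2).intervalIntegrable
  have hv2 : IntervalIntegrable (fun x ↦ c ^ 2 * v x ^ 2) MeasureTheory.volume a b :=
    ((hv.pow 2).const_smul (c ^ 2)).intervalIntegrable
  rw [← intervalIntegral.integral_const_mul, ← intervalIntegral.integral_const_mul,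
    ← intervalIntegral.integral_add hu2 hv2]
  refine intervalIntegral.integral_mono_on hab ((hu.mul hv).intervalIntegrable.const_mul _)
    (hu2.add hv2) fun x _ ↦ ?_
  linarith [two_mul_le_add_sq (u x) (c * v x)]

/-- Resolvent estimate for the adjoint projected system: if `σ > 0`, `n ≠ 0`, `λ > 0` and
`(ζ, ℓ)` solves `λ·ζ - ζ'' + n²·ζ = f` on `[-1,1]`, `λ·ℓ + σ·n²·ζ'(1) = g`, `ζ(-1) = 0`,
`ζ(1) = ℓ`, then `λ²·(∫ζ² + ℓ²/(σn²)) ≤ ∫f² + g²/(σn²)`. -/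
theorem stmt3 (σ : ℝ) (hσ : 0 < σ) (n : ℤ) (hn : n ≠ 0) (lam : ℝ) (hlam : 0 < lam)
    (ζ ζ' ζ'' : ℝ → ℝ) (ℓ : ℝ) (f : ℝ → ℝ) (g : ℝ)
    (hζ' : ∀ x ∈ Icc (-1:ℝ) 1, HasDerivWithinAt ζ (ζ' x) (Icc (-1:ℝ) 1) x)
    (hζ'' : ∀ x ∈ Icc (-1:ℝ) 1, HasDerivWithinAt ζ' (ζ'' x) (Icc (-1:ℝ) 1) x)
    (hcont : ContinuousOn ζ'' (Icc (-1:ℝ) 1))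
    (hf : ContinuousOn f (Icc (-1:ℝ) 1))
    (heq : ∀ x ∈ Icc (-1:ℝ) 1, lam * ζ x - ζ'' x + (n:ℝ)^2 * ζ x = f x)
    (hbc : lam * ℓ + σ * (n:ℝ)^2 * ζ' 1 = g)
    (hbot : ζ (-1) = 0)
    (htop : ζ 1 = ℓ) :
    lam^2 * ((∫ x in (-1:ℝ)..1, ζ x ^ 2) + ℓ^2 / (σ * (n:ℝ)^2))
      ≤ (∫ x in (-1:ℝ)..1, f x ^ 2) + g^2 / (σ * (n:ℝ)^2) := by
  have hab : (-1:ℝ) ≤ 1 := by norm_num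
  have hn' : (n:ℝ) ≠ 0 := by exact_mod_cast hn
  set s := σ * (n:ℝ)^2
  have hs : 0 < s := by positivity
  have energy := integral_mul_eq_of_sub_deriv2_eq (c := lam + (n:ℝ)^2) (f := f) hab hζ' hζ'' hcont
    fun x hx ↦ by linarith [heq x hx]
  rw [hbot, htop] at energy
  have young := two_mul_mul_integral_mul_le lam hab hf fun x hx ↦ (hζ' x hx).continuousWithinAt
  have hζ2 : 0 ≤ ∫ x in (-1:ℝ)..1, ζ x ^ 2 :=
    intervalIntegral.integral_nonneg hab fun x _ ↦ sq_nonneg _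
  have hζ'2 : 0 ≤ ∫ x in (-1:ℝ)..1, ζ' x ^ 2 :=
    intervalIntegral.integral_nonneg hab fun x _ ↦ sq_nonneg _
  have coercive : lam * (s * (∫ x in (-1:ℝ)..1, ζ x ^ 2) + ℓ ^ 2)
      ≤ s * (∫ x in (-1:ℝ)..1, f x * ζ x) + g * ℓ := by
    nlinarith [congrArg (s * ·) energy, congrArg (ℓ * ·) hbc, mul_nonneg hs.le hζ'2, mul_nonneg (mul_nonneg hs.le (sq_nonneg (n:ℝ))) hζ2]
  have key : lam ^ 2 * (s * (∫ x in (-1:ℝ)..1, ζ x ^ 2) + ℓ ^ 2)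
      ≤ s * (∫ x in (-1:ℝ)..1, f x ^ 2) + g ^ 2 := by
    nlinarith [mul_le_mul_of_nonneg_left young hs.le, two_mul_le_add_sq g (lam * ℓ)]
  calc lam^2 * ((∫ x in (-1:ℝ)..1, ζ x ^ 2) + ℓ^2 / s)
      = lam ^ 2 * (s * (∫ x in (-1:ℝ)..1, ζ x ^ 2) + ℓ ^ 2) / s := by field_simp
    _ ≤ (s * (∫ x in (-1:ℝ)..1, f x ^ 2) + g ^ 2) / s := by gcongr
    _ = (∫ x in (-1:ℝ)..1, f x ^ 2) + g^2 / s := by field_simp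
end

section
/- For every σ > 0, every nonzero integer n, and every integer k ≥ 1, there exists a real number ν with kπ/2 < ν < kπ/2 + π/4 such that (ν²/n² + 1)·tan(2ν) = σ·ν. -/
/-!
Substituting `y = 2ν` turns the equation into `tan y = ψ y` with
`ψ y = σ (y/2) / ((y/2)²/n² + 1)`, which is continuous, positive at `y = kπ`, and bounded on
`[kπ, kπ + π/2]`. On that branch `tan` rises from `0` to `+∞`, so it crosses `ψ` by the
intermediate value theorem.
-/

open Real Set

theorem exists_tan_eq_of_continuousOn (k : ℤ) {ψ : ℝ → ℝ}
    (hψ : ContinuousOn ψ (Icc (k * π) (k * π + π / 2))) (hψ₀ : 0 < ψ (k * π)) :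
    ∃ y ∈ Ioo (k * π) (k * π + π / 2), tan y = ψ y := by
  obtain ⟨M, hM⟩ := isCompact_Icc.bddAbove_image hψ
  set T := max M 0 + 1
  have hT : 0 < T := by positivity
  set t := arctan T
  have ht₀ : 0 < t := arctan_pos.mpr hT
  have htπ : t < π / 2 := arctan_lt_pi_div_two T
  have hψ_le : ∀ s ∈ Icc 0 t, ψ (k * π + s) ≤ M := fun s hs =>
    hM ⟨k * π + s, ⟨by linarith [hs.1], by linarith [hs.2]⟩, rfl⟩
  have hF : ContinuousOn (fun s => tan s - ψ (k * π + s)) (Icc 0 t) := by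
    refine ContinuousOn.sub (continuousOn_tan_Ioo.mono fun s hs => ⟨?_, ?_⟩) ?_
    · linarith [hs.1, pi_pos]
    · linarith [hs.2]
    · exact hψ.comp (by fun_prop) fun s hs => ⟨by linarith [hs.1], by linarith [hs.2]⟩
  have hF₀ : tan 0 - ψ (k * π + 0) < 0 := by simpa using hψ₀
  have hFt : 0 < tan t - ψ (k * π + t) := by
    have := hψ_le t ⟨ht₀.le, le_rfl⟩
    rw [tan_arctan]
    linarith [le_max_left M 0]
  obtain ⟨s, hs, hFs⟩ := intermediate_value_Ioo ht₀.le hF ⟨hF₀, hFt⟩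
  refine ⟨k * π + s, ⟨by linarith [hs.1], by linarith [hs.2]⟩, ?_⟩
  calc tan (k * π + s) = tan s := by rw [add_comm, tan_add_int_mul_pi]
    _ = ψ (k * π + s) := sub_eq_zero.mp hFs

theorem stmt4_general (σ : ℝ) (hσ : 0 < σ) (n : ℤ) (k : ℕ) (hk : 1 ≤ k) :
    ∃ ν : ℝ, (k:ℝ) * Real.pi / 2 < ν ∧ ν < (k:ℝ) * Real.pi / 2 + Real.pi / 4 ∧
      (ν^2 / (n:ℝ)^2 + 1) * Real.tan (2 * ν) = σ * ν := by
  have hden : ∀ ν : ℝ, 0 < ν ^ 2 / (n:ℝ) ^ 2 + 1 := fun ν => by positivity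
  set ψ : ℝ → ℝ := fun y => σ * (y / 2) / ((y / 2) ^ 2 / (n:ℝ) ^ 2 + 1)
  have hψ : ContinuousOn ψ (Icc ((k:ℤ) * π) ((k:ℤ) * π + π / 2)) :=
    (Continuous.div (by fun_prop) (by fun_prop) fun y => (hden (y / 2)).ne').continuousOn
  have hψ₀ : 0 < ψ ((k:ℤ) * π) := by
    have : (0:ℝ) < k := by exact_mod_cast hk
    positivity
  obtain ⟨y, ⟨hy₁, hy₂⟩, hy⟩ := exists_tan_eq_of_continuousOn k hψ hψ₀
  push_cast at hy₁ hy₂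
  refine ⟨y / 2, by linarith, by linarith, ?_⟩
  rw [mul_div_cancel₀ y two_ne_zero, hy]
  exact mul_div_cancel₀ _ (hden (y / 2)).ne'

/-- For every `σ > 0`, every nonzero integer `n` and every integer `k ≥ 1`, the transcendental
equation `(ν²/n² + 1)·tan(2ν) = σ·ν` has a root `ν` in the interval `(kπ/2, kπ/2 + π/4)`. -/
theorem stmt4 (σ : ℝ) (hσ : 0 < σ) (n : ℤ) (hn : n ≠ 0) (k : ℕ) (hk : 1 ≤ k) :
    ∃ ν : ℝ, (k:ℝ) * Real.pi / 2 < ν ∧ ν < (k:ℝ) * Real.pi / 2 + Real.pi / 4 ∧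
      (ν^2 / (n:ℝ)^2 + 1) * Real.tan (2 * ν) = σ * ν :=
  stmt4_general σ hσ n k hk
end

section
/- Let σ > 0, let n be a nonzero integer, and let λ ∈ ℝ with λ < −n². Suppose (y, h) is a nontrivial solution of the projected eigensystem with parameters (σ, n, λ), i.e. y is not identically zero on [−1, 1] or h ≠ 0. Set ν := √(−λ − n²). Then cos(2ν) ≠ 0, the transcendental equation (ν² + n²)·sin(2ν) = σ·n²·ν·cos(2ν) holds, and there exists a nonzero constant c ∈ ℝ such that y(x) = c·sin(ν·(1 + x)) for all x ∈ [−1, 1]. -/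
/-!
On `[-1, 1]` the equation reads `y'' = -ν² y`. The Wronskian-type quantities
`ν y cos θ - y' sin θ` and `ν y sin θ + y' cos θ`, with `θ = ν (1 + x)`, have zero derivative,
so `y = (y'(-1)/ν) sin θ` by `y(-1) = 0`. Nontriviality forces `y'(-1) ≠ 0`, and the two
conditions at `x = 1` become `λ h = y'(-1) cos 2ν` and `ν y(1) = y'(-1) sin 2ν = -σ n² ν h`;
`cos 2ν = 0` would give `h = 0`, hence `sin 2ν = 0`, and eliminating `h` gives the
transcendental equation since `-λ = ν² + n²`.
-/

open Set Real

theorem eq_left_of_hasDerivWithinAt_zero {f : ℝ → ℝ} {a b : ℝ}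
    (hf : ∀ x ∈ Icc a b, HasDerivWithinAt f 0 (Icc a b) x) : ∀ x ∈ Icc a b, f x = f a :=
  constant_of_has_deriv_right_zero (HasDerivWithinAt.continuousOn hf) fun x hx =>
    (hf x (Ico_subset_Icc_self hx)).mono_of_mem_nhdsWithin (Icc_mem_nhdsGE_of_mem hx)

section HarmonicOscillator

variable {y y' y'' : ℝ → ℝ} {ν a b : ℝ}

theorem harmonic_cos_invariant (hy' : ∀ x ∈ Icc a b, HasDerivWithinAt y (y' x) (Icc a b) x)
    (hy'' : ∀ x ∈ Icc a b, HasDerivWithinAt y' (y'' x) (Icc a b) x)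
    (hode : ∀ x ∈ Icc a b, y'' x = -ν ^ 2 * y x) :
    ∀ x ∈ Icc a b, ν * y x * cos (ν * (x - a)) - y' x * sin (ν * (x - a)) = ν * y a := by
  have hconst := eq_left_of_hasDerivWithinAt_zero (f := fun t =>
    ν * y t * cos (ν * (t - a)) - y' t * sin (ν * (t - a))) fun x hx => by
    have hθ : HasDerivAt (fun t => ν * (t - a)) ν x := by
      simpa using ((hasDerivAt_id x).sub_const a).const_mul ν
    refine ((((hy' x hx).const_mul ν).mul hθ.cos.hasDerivWithinAt).sub
      ((hy'' x hx).mul hθ.sin.hasDerivWithinAt)).congr_deriv ?_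
    rw [hode x hx]; ring
  intro x hx
  simpa using hconst x hx

theorem harmonic_sin_invariant (hy' : ∀ x ∈ Icc a b, HasDerivWithinAt y (y' x) (Icc a b) x)
    (hy'' : ∀ x ∈ Icc a b, HasDerivWithinAt y' (y'' x) (Icc a b) x)
    (hode : ∀ x ∈ Icc a b, y'' x = -ν ^ 2 * y x) :
    ∀ x ∈ Icc a b, ν * y x * sin (ν * (x - a)) + y' x * cos (ν * (x - a)) = y' a := by
  have hconst := eq_left_of_hasDerivWithinAt_zero (f := fun t =>
    ν * y t * sin (ν * (t - a)) + y' t * cos (ν * (t - a))) fun x hx => by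
    have hθ : HasDerivAt (fun t => ν * (t - a)) ν x := by
      simpa using ((hasDerivAt_id x).sub_const a).const_mul ν
    refine ((((hy' x hx).const_mul ν).mul hθ.sin.hasDerivWithinAt).add
      ((hy'' x hx).mul hθ.cos.hasDerivWithinAt)).congr_deriv ?_
    rw [hode x hx]; ring
  intro x hx
  simpa using hconst x hx

theorem harmonic_eq_sin_of_left_eq_zero
    (hy' : ∀ x ∈ Icc a b, HasDerivWithinAt y (y' x) (Icc a b) x)
    (hy'' : ∀ x ∈ Icc a b, HasDerivWithinAt y' (y'' x) (Icc a b) x)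
    (hode : ∀ x ∈ Icc a b, y'' x = -ν ^ 2 * y x) (ha : y a = 0) :
    ∀ x ∈ Icc a b, ν * y x = y' a * sin (ν * (x - a)) ∧ y' x = y' a * cos (ν * (x - a)) := by
  intro x hx
  have hc := harmonic_cos_invariant hy' hy'' hode x hx
  have hs := harmonic_sin_invariant hy' hy'' hode x hx
  have hpyth := sin_sq_add_cos_sq (ν * (x - a))
  rw [ha, mul_zero] at hc
  constructor
  · linear_combination cos (ν * (x - a)) * hc + sin (ν * (x - a)) * hs - ν * y x * hpyth
  · linear_combination -sin (ν * (x - a)) * hc + cos (ν * (x - a)) * hs - y' x * hpyth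

end HarmonicOscillator

theorem cos_ne_zero_of_boundary_conditions {k h lam c ν θ : ℝ} (hk : k ≠ 0) (hlam : lam ≠ 0)
    (hcos : lam * h = k * cos θ) (hsin : ν * (c * h) = k * sin θ) : cos θ ≠ 0 := by
  intro hc
  have hh : h = 0 := by simpa [hc, hlam] using hcos
  have hs : sin θ = 0 := by simpa [hh, hk, eq_comm] using hsin
  simpa [hs, hc] using sin_sq_add_cos_sq θ

theorem stmt5_general (σ : ℝ) (n : ℤ) (lam : ℝ) (hlam : lam < -(n:ℝ)^2)
    (y y' y'' : ℝ → ℝ) (h : ℝ)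
    (hy' : ∀ x ∈ Icc (-1:ℝ) 1, HasDerivWithinAt y (y' x) (Icc (-1:ℝ) 1) x)
    (hy'' : ∀ x ∈ Icc (-1:ℝ) 1, HasDerivWithinAt y' (y'' x) (Icc (-1:ℝ) 1) x)
    (heq : ∀ x ∈ Icc (-1:ℝ) 1, lam * y x - y'' x + (n:ℝ)^2 * y x = 0)
    (hbc : lam * h = y' 1)
    (hbot : y (-1) = 0)
    (htop : y 1 = -σ * (n:ℝ)^2 * h)
    (hnontriv : (¬ ∀ x ∈ Icc (-1:ℝ) 1, y x = 0) ∨ h ≠ 0) :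
    Real.cos (2 * Real.sqrt (-lam - (n:ℝ)^2)) ≠ 0 ∧
    (Real.sqrt (-lam - (n:ℝ)^2) ^ 2 + (n:ℝ)^2) * Real.sin (2 * Real.sqrt (-lam - (n:ℝ)^2))
      = σ * (n:ℝ)^2 * Real.sqrt (-lam - (n:ℝ)^2) * Real.cos (2 * Real.sqrt (-lam - (n:ℝ)^2)) ∧
    ∃ c : ℝ, c ≠ 0 ∧
      ∀ x ∈ Icc (-1:ℝ) 1, y x = c * Real.sin (Real.sqrt (-lam - (n:ℝ)^2) * (1 + x)) := by
  set ν := √(-lam - (n:ℝ)^2)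
  have hν : 0 < ν := sqrt_pos.mpr (by linarith)
  have hν2 : ν ^ 2 = -lam - (n:ℝ)^2 := sq_sqrt (by linarith)
  have hlam0 : lam ≠ 0 := by nlinarith
  have hsol : ∀ x ∈ Icc (-1:ℝ) 1,
      ν * y x = y' (-1) * sin (ν * (1 + x)) ∧ y' x = y' (-1) * cos (ν * (1 + x)) := by
    simpa only [sub_neg_eq_add, add_comm _ (1:ℝ)] using
      harmonic_eq_sin_of_left_eq_zero hy' hy'' (fun x hx => by rw [hν2]; linarith [heq x hx]) hbot
  obtain ⟨hy1, hy'1⟩ := hsol 1 (by norm_num)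
  rw [show ν * (1 + 1) = 2 * ν by ring] at hy1 hy'1
  have hcos := hbc.trans hy'1
  have hk : y' (-1) ≠ 0 := by
    intro hk
    refine hnontriv.elim (· fun x hx => ?_) (· ?_)
    · simpa [hk, hν.ne'] using (hsol x hx).1
    · simpa [hk, hlam0] using hcos
  have hsin : ν * (-σ * (n:ℝ)^2 * h) = y' (-1) * sin (2 * ν) := htop ▸ hy1
  refine ⟨cos_ne_zero_of_boundary_conditions hk hlam0 hcos hsin, ?_,
    y' (-1) / ν, div_ne_zero hk hν.ne', fun x hx => ?_⟩
  · refine mul_left_cancel₀ hk ?_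
    linear_combination lam * hsin + σ * (n:ℝ)^2 * ν * hcos + y' (-1) * sin (2 * ν) * hν2
  · rw [div_mul_eq_mul_div, eq_div_iff hν.ne', ← (hsol x hx).1, mul_comm]

/-- Structure of the eigenfunctions for eigenvalues `λ < -n²`: if `(y, h)` is a nontrivial
solution of the projected eigensystem with parameters `(σ, n, λ)` and `ν := √(-λ - n²)`, then
`cos(2ν) ≠ 0`, the transcendental equation `(ν² + n²)·sin(2ν) = σ·n²·ν·cos(2ν)` holds, and
`y(x) = c·sin(ν(1+x))` on `[-1,1]` for some nonzero constant `c`. -/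
theorem stmt5 (σ : ℝ) (hσ : 0 < σ) (n : ℤ) (hn : n ≠ 0) (lam : ℝ) (hlam : lam < -(n:ℝ)^2)
    (y y' y'' : ℝ → ℝ) (h : ℝ)
    (hy' : ∀ x ∈ Icc (-1:ℝ) 1, HasDerivWithinAt y (y' x) (Icc (-1:ℝ) 1) x)
    (hy'' : ∀ x ∈ Icc (-1:ℝ) 1, HasDerivWithinAt y' (y'' x) (Icc (-1:ℝ) 1) x)
    (hcont : ContinuousOn y'' (Icc (-1:ℝ) 1))
    (heq : ∀ x ∈ Icc (-1:ℝ) 1, lam * y x - y'' x + (n:ℝ)^2 * y x = 0)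
    (hbc : lam * h = y' 1)
    (hbot : y (-1) = 0)
    (htop : y 1 = -σ * (n:ℝ)^2 * h)
    (hnontriv : (¬ ∀ x ∈ Icc (-1:ℝ) 1, y x = 0) ∨ h ≠ 0) :
    Real.cos (2 * Real.sqrt (-lam - (n:ℝ)^2)) ≠ 0 ∧
    (Real.sqrt (-lam - (n:ℝ)^2) ^ 2 + (n:ℝ)^2) * Real.sin (2 * Real.sqrt (-lam - (n:ℝ)^2))
      = σ * (n:ℝ)^2 * Real.sqrt (-lam - (n:ℝ)^2) * Real.cos (2 * Real.sqrt (-lam - (n:ℝ)^2)) ∧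
    ∃ c : ℝ, c ≠ 0 ∧
      ∀ x ∈ Icc (-1:ℝ) 1, y x = c * Real.sin (Real.sqrt (-lam - (n:ℝ)^2) * (1 + x)) :=
  stmt5_general σ n lam hlam y y' y'' h hy' hy'' heq hbc hbot htop hnontriv
end

section
/- Let σ > 0 and let n be a nonzero integer. The following are equivalent: (i) there exist y : ℝ → ℝ twice continuously differentiable on [−1, 1] and h ∈ ℝ, with y not identically zero on [−1, 1] or h ≠ 0, such that y''(x) = 0 for all x ∈ [−1, 1], −n²·h = y'(1), y(−1) = 0, and y(1) = −σ·n²·h; (ii) σ = 2. (In other words, λ = −n² is an eigenvalue of A_n if and only if σ = 2.) -/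
open Set

section ConstantDerivative

variable {E : Type*} [NormedAddCommGroup E] [NormedSpace ℝ E] {s : Set ℝ} {f f' : ℝ → E}

theorem Convex.eq_of_hasDerivWithinAt_zero (hs : Convex ℝ s)
    (hf : ∀ x ∈ s, HasDerivWithinAt f 0 s x) {a b : ℝ} (ha : a ∈ s) (hb : b ∈ s) :
    f a = f b := by
  have h := hs.norm_image_sub_le_of_norm_hasDerivWithin_le hf (fun _ _ => norm_zero.le) hb ha
  rwa [zero_mul, norm_le_zero_iff, sub_eq_zero] at h

theorem Convex.eq_add_smul_of_hasDerivWithinAt_of_hasDerivWithinAt_zero (hs : Convex ℝ s)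
    (hf : ∀ x ∈ s, HasDerivWithinAt f (f' x) s x) (hf' : ∀ x ∈ s, HasDerivWithinAt f' 0 s x)
    {a b x : ℝ} (ha : a ∈ s) (hb : b ∈ s) (hx : x ∈ s) :
    f x = f a + (x - a) • f' b := by
  have hslope : ∀ t ∈ s, f' t = f' b := fun t ht => hs.eq_of_hasDerivWithinAt_zero hf' ht hb
  have hline : ∀ t ∈ s,
      HasDerivWithinAt (fun u => f u - (u - a) • f' b) 0 s t := fun t ht => by
    simpa [hslope t ht, Pi.sub_def] using
      (hf t ht).sub (((hasDerivWithinAt_id t s).sub_const a).smul_const (f' b))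
  have h := hs.eq_of_hasDerivWithinAt_zero hline hx ha
  rw [sub_self, zero_smul, sub_zero, sub_eq_iff_eq_add] at h
  rw [h, add_comm]

end ConstantDerivative

theorem stmt6_general (σ : ℝ) (n : ℤ) (hn : n ≠ 0) :
    (∃ (y y' y'' : ℝ → ℝ) (h : ℝ),
      (∀ x ∈ Icc (-1:ℝ) 1, HasDerivWithinAt y (y' x) (Icc (-1:ℝ) 1) x) ∧
      (∀ x ∈ Icc (-1:ℝ) 1, HasDerivWithinAt y' (y'' x) (Icc (-1:ℝ) 1) x) ∧
      ContinuousOn y'' (Icc (-1:ℝ) 1) ∧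
      ((¬ ∀ x ∈ Icc (-1:ℝ) 1, y x = 0) ∨ h ≠ 0) ∧
      (∀ x ∈ Icc (-1:ℝ) 1, y'' x = 0) ∧
      -(n:ℝ)^2 * h = y' 1 ∧
      y (-1) = 0 ∧
      y 1 = -σ * (n:ℝ)^2 * h)
    ↔ σ = 2 := by
  have hn2 : (n:ℝ)^2 ≠ 0 := by positivity
  have hleft : (-1:ℝ) ∈ Icc (-1:ℝ) 1 := by norm_num
  have hright : (1:ℝ) ∈ Icc (-1:ℝ) 1 := by norm_num
  constructor
  · rintro ⟨y, y', y'', h, hy, hy', -, hnontriv, hy'', hslope, hy_left, hy_right⟩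
    have hline : ∀ x ∈ Icc (-1:ℝ) 1, y x = (x + 1) * (-(n:ℝ)^2 * h) := fun x hx => by
      have haffine := (convex_Icc (-1:ℝ) 1).eq_add_smul_of_hasDerivWithinAt_of_hasDerivWithinAt_zero hy
        (fun t ht => hy'' t ht ▸ hy' t ht) hleft hright hx
      rw [haffine, hy_left, hslope, smul_eq_mul]
      ring
    have hh : h ≠ 0 := by
      rintro rfl
      refine hnontriv.elim (fun hy0 => hy0 fun x hx => ?_) (· rfl)
      simp [hline x hx]
    have hy_one := hline 1 hright
    rw [hy_right] at hy_one
    exact mul_right_cancel₀ (mul_ne_zero hn2 hh) (by linarith)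
  · rintro rfl
    refine ⟨fun x => x + 1, fun _ => 1, fun _ => 0, -1 / (n:ℝ)^2,
      fun x _ => (hasDerivWithinAt_id x _).add_const 1, fun x _ => hasDerivWithinAt_const _ _ _,
      continuousOn_const, Or.inr (by simp [hn2]), fun _ _ => rfl, ?_, by norm_num, ?_⟩
    · field_simp
    · field_simp
      norm_num

/-- `λ = -n²` is an eigenvalue of the projected operator `A_n` if and only if `σ = 2`:
there is a nontrivial `(y, h)` with `y'' = 0` on `[-1,1]`, `-n²·h = y'(1)`, `y(-1) = 0` and
`y(1) = -σ·n²·h` precisely when `σ = 2`. -/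
theorem stmt6 (σ : ℝ) (hσ : 0 < σ) (n : ℤ) (hn : n ≠ 0) :
    (∃ (y y' y'' : ℝ → ℝ) (h : ℝ),
      (∀ x ∈ Icc (-1:ℝ) 1, HasDerivWithinAt y (y' x) (Icc (-1:ℝ) 1) x) ∧
      (∀ x ∈ Icc (-1:ℝ) 1, HasDerivWithinAt y' (y'' x) (Icc (-1:ℝ) 1) x) ∧
      ContinuousOn y'' (Icc (-1:ℝ) 1) ∧
      ((¬ ∀ x ∈ Icc (-1:ℝ) 1, y x = 0) ∨ h ≠ 0) ∧
      (∀ x ∈ Icc (-1:ℝ) 1, y'' x = 0) ∧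
      -(n:ℝ)^2 * h = y' 1 ∧
      y (-1) = 0 ∧
      y 1 = -σ * (n:ℝ)^2 * h)
    ↔ σ = 2 :=
  stmt6_general σ n hn
end

section
/- Let σ ∈ (0, 2) and let n be a nonzero integer. Define f : ℝ → ℝ by f(ν) = (−ν² − σ·n²·ν + n²) + (ν² − σ·n²·ν − n²)·e^{−4ν}. Then there exists exactly one ν₀ ∈ (0, |n|) with f(ν₀) = 0; moreover ν₀ < (1/2)·(√(σ²·n⁴ + 4n²) − σ·n²) and (1/2)·(√(σ²·n⁴ + 4n²) − σ·n²) ≤ 1/σ. -/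
open Set

/-- `sinh x / (x * cosh x)` (i.e. `tanh x / x`) is strictly decreasing on `(0, ∞)`. -/
private lemma tanhAux_strictAnti :
    StrictAntiOn (fun x : ℝ => Real.sinh x / (x * Real.cosh x)) (Set.Ioi 0) := by
  apply strictAntiOn_of_deriv_neg (convex_Ioi 0)
  · exact Real.continuous_sinh.continuousOn.div
      (continuous_id.mul Real.continuous_cosh).continuousOn
      (fun x hx => mul_ne_zero (ne_of_gt hx) (ne_of_gt (Real.cosh_pos x)))
  · intro x hx
    rw [interior_Ioi] at hx
    have hx0 : (0:ℝ) < x := hx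
    have hc : 0 < Real.cosh x := Real.cosh_pos x
    have hd : HasDerivAt (fun x : ℝ => Real.sinh x / (x * Real.cosh x))
        ((Real.cosh x * (x * Real.cosh x) -
          Real.sinh x * (1 * Real.cosh x + x * Real.sinh x)) / (x * Real.cosh x) ^ 2) x :=
      (Real.hasDerivAt_sinh x).div ((hasDerivAt_id x).mul (Real.hasDerivAt_cosh x))
        (by positivity)
    rw [hd.deriv]
    apply div_neg_of_neg_of_pos
    · have hs : x < Real.sinh x := Real.self_lt_sinh_iff.mpr hx0
      have h1 : Real.cosh x ^ 2 - Real.sinh x ^ 2 = 1 := Real.cosh_sq_sub_sinh_sq x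
      have hc1 : (1:ℝ) ≤ Real.cosh x := Real.one_le_cosh x
      have h2 : Real.sinh x ≤ Real.sinh x * Real.cosh x :=
        le_mul_of_one_le_right (by linarith) hc1
      nlinarith
    · positivity

/-- The root equation is equivalent to `(N - ν²) sinh(2ν) = σNν cosh(2ν)`. -/
private lemma root_iff (σ N ν : ℝ) :
    ((-ν^2 - σ*N*ν + N) + (ν^2 - σ*N*ν - N) * Real.exp (-4*ν) = 0) ↔
    (N - ν^2) * Real.sinh (2*ν) = σ*N*ν * Real.cosh (2*ν) := by
  have e0 : Real.exp (2*ν) * Real.exp (-(2*ν)) = 1 := by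
    rw [← Real.exp_add, add_neg_cancel, Real.exp_zero]
  have e4 : Real.exp (-4*ν) = Real.exp (-(2*ν)) * Real.exp (-(2*ν)) := by
    rw [← Real.exp_add]; ring_nf
  have key : ((-ν^2 - σ*N*ν + N) + (ν^2 - σ*N*ν - N) * Real.exp (-4*ν)) * Real.exp (2*ν)
      = 2 * ((N - ν^2) * Real.sinh (2*ν) - σ*N*ν * Real.cosh (2*ν)) := by
    rw [Real.sinh_eq, Real.cosh_eq, e4]
    linear_combination ((ν^2 - σ*N*ν - N) * Real.exp (-(2*ν))) * e0
  constructor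
  · intro h
    have h2 := key
    rw [h, zero_mul] at h2
    linarith
  · intro h
    have h2 : ((-ν^2 - σ*N*ν + N) + (ν^2 - σ*N*ν - N) * Real.exp (-4*ν))
        * Real.exp (2*ν) = 0 := by rw [key, h, sub_self, mul_zero]
    exact (mul_eq_zero.mp h2).resolve_right (Real.exp_ne_zero _)

/-- Two distinct roots of the transformed equation in `(0, √N)` are impossible. -/
private lemma uniq_core (σ N : ℝ) (hσ0 : 0 < σ) (hN : 0 < N) {x y : ℝ}
    (hx0 : 0 < x) (hy0 : 0 < y) (hx2 : x^2 < N) (hy2 : y^2 < N) (hxy : x < y)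
    (hxeq : (N - x^2) * Real.sinh (2*x) = σ*N*x * Real.cosh (2*x))
    (hyeq : (N - y^2) * Real.sinh (2*y) = σ*N*y * Real.cosh (2*y)) : False := by
  have hrel : ∀ ν : ℝ, 0 < ν → ν^2 < N →
      (N - ν^2) * Real.sinh (2*ν) = σ*N*ν * Real.cosh (2*ν) →
      Real.sinh (2*ν) / (2*ν * Real.cosh (2*ν)) = σ*N / (2*(N - ν^2)) := by
    intro ν hν0 hν2 hroot
    rw [div_eq_div_iff
      (ne_of_gt (mul_pos (by linarith : (0:ℝ) < 2*ν) (Real.cosh_pos (2*ν))))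
      (ne_of_gt (by nlinarith : (0:ℝ) < 2*(N - ν^2)))]
    linear_combination 2 * hroot
  have e1 := hrel x hx0 hx2 hxeq
  have e2 := hrel y hy0 hy2 hyeq
  have hanti := tanhAux_strictAnti (Set.mem_Ioi.mpr (by linarith : (0:ℝ) < 2*x))
    (Set.mem_Ioi.mpr (by linarith : (0:ℝ) < 2*y)) (by linarith)
  simp only at hanti
  rw [e1, e2] at hanti
  rw [div_lt_div_iff₀ (by nlinarith) (by nlinarith)] at hanti
  have hsq : (0:ℝ) < y^2 - x^2 := by
    nlinarith [mul_pos (sub_pos.mpr hxy) (show (0:ℝ) < x + y by linarith)]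
  nlinarith [mul_pos (mul_pos hσ0 hN) hsq]

set_option maxHeartbeats 800000 in
/-- Existence of a root of the transformed equation in `(0, r)`, where `r` is the
positive root of `r² + σNr = N`. -/
private lemma exists_root (σ N r : ℝ) (hσ0 : 0 < σ) (hσ2 : σ < 2) (hN1 : 1 ≤ N)
    (hr_pos : 0 < r) (hrq : r^2 + σ*N*r = N) :
    ∃ ν₀ : ℝ, 0 < ν₀ ∧ ν₀ < r ∧
      (N - ν₀^2) * Real.sinh (2*ν₀) = σ*N*ν₀ * Real.cosh (2*ν₀) := by
  have hN : (0:ℝ) < N := by linarith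
  have hσN : 0 < σ * N := mul_pos hσ0 hN
  set Φ : ℝ → ℝ := fun ν => (N - ν^2) * Real.sinh (2*ν) - σ*N*ν * Real.cosh (2*ν) with hΦ_def
  have hΦr : Φ r < 0 := by
    have h1 : N - r^2 = σ*N*r := by linarith
    have h2 : Real.sinh (2*r) - Real.cosh (2*r) = -Real.exp (-(2*r)) :=
      Real.sinh_sub_cosh _
    have h3 : 0 < Real.exp (-(2*r)) := Real.exp_pos _
    simp only [hΦ_def]
    rw [h1]
    nlinarith [mul_pos hσN hr_pos]
  obtain ⟨c, hc0, hcr, hcσ, hc14⟩ :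
      ∃ c : ℝ, 0 < c ∧ c < r ∧ c ≤ (2-σ)/8 ∧ c < 1/4 :=
    ⟨min ((2-σ)/8) (r/2), lt_min (by linarith) (by linarith),
      lt_of_le_of_lt (min_le_right _ _) (by linarith), min_le_left _ _,
      lt_of_le_of_lt (min_le_left _ _) (by linarith)⟩
  have hΦc : 0 < Φ c := by
    have hb : 0 < 1 - 2*c := by linarith
    have h1 : 2*c ≤ Real.sinh (2*c) := Real.self_le_sinh_iff.mpr (by linarith)
    have h2 : Real.cosh (2*c) ≤ Real.exp (2*c) := by
      have := Real.exp_le_exp.mpr (show -(2*c) ≤ 2*c by linarith)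
      rw [Real.cosh_eq]; linarith
    have ha : 1 - 2*c ≤ Real.exp (-(2*c)) := by
      have := Real.add_one_le_exp (-(2*c)); linarith
    have hmul : Real.exp (2*c) * Real.exp (-(2*c)) = 1 := by
      rw [← Real.exp_add, add_neg_cancel, Real.exp_zero]
    have h3 : Real.exp (2*c) ≤ 1/(1 - 2*c) := by
      have h4 : Real.exp (2*c) * (1-2*c) ≤ Real.exp (2*c) * Real.exp (-(2*c)) :=
        mul_le_mul_of_nonneg_left ha (Real.exp_pos (2*c)).le
      rw [le_div_iff₀ hb]
      linarith
    have hNc : 0 < N - c^2 := by nlinarith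
    have hA : (N - c^2) * (2*c) ≤ (N - c^2) * Real.sinh (2*c) :=
      mul_le_mul_of_nonneg_left h1 (le_of_lt hNc)
    have hB : σ*N*c * Real.cosh (2*c) ≤ σ*N*c * (1/(1-2*c)) :=
      mul_le_mul_of_nonneg_left (h2.trans h3) (by positivity)
    have hkey : σ*N < 2*(N - c^2)*(1-2*c) := by
      nlinarith [hN1, hc0, hcσ, hc14, sq_nonneg c, mul_pos hc0 hc0]
    have hC : σ*N*c * (1/(1-2*c)) < (N - c^2) * (2*c) := by
      rw [mul_one_div, div_lt_iff₀ hb]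
      nlinarith [hkey, hc0]
    simp only [hΦ_def]
    linarith
  have hcont : ContinuousOn Φ (Set.Icc c r) := by
    apply Continuous.continuousOn
    simp only [hΦ_def]
    continuity
  have himage : Set.Ioo (Φ r) (Φ c) ⊆ Φ '' Set.Ioo c r :=
    intermediate_value_Ioo' (le_of_lt hcr) hcont
  obtain ⟨ν₀, hν₀mem, hν₀Φ⟩ := himage ⟨hΦr, hΦc⟩
  refine ⟨ν₀, lt_trans hc0 hν₀mem.1, hν₀mem.2, ?_⟩
  simp only [hΦ_def] at hν₀Φ
  linarith

set_option maxHeartbeats 2000000 in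
/-- For `σ ∈ (0,2)` and `n ≠ 0`, the function
`f(ν) = (-ν² - σn²ν + n²) + (ν² - σn²ν - n²)e^{-4ν}` has exactly one root `ν₀` in `(0, |n|)`;
moreover `ν₀ < (1/2)(√(σ²n⁴ + 4n²) - σn²)` and `(1/2)(√(σ²n⁴ + 4n²) - σn²) ≤ 1/σ`. -/
theorem stmt7 (σ : ℝ) (hσ : σ ∈ Set.Ioo (0:ℝ) 2) (n : ℤ) (hn : n ≠ 0) :
    ∃ ν₀ : ℝ,
      (ν₀ ∈ Set.Ioo (0:ℝ) |(n:ℝ)| ∧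
        (-ν₀^2 - σ * (n:ℝ)^2 * ν₀ + (n:ℝ)^2)
          + (ν₀^2 - σ * (n:ℝ)^2 * ν₀ - (n:ℝ)^2) * Real.exp (-4 * ν₀) = 0) ∧
      (∀ ν ∈ Set.Ioo (0:ℝ) |(n:ℝ)|,
        (-ν^2 - σ * (n:ℝ)^2 * ν + (n:ℝ)^2)
          + (ν^2 - σ * (n:ℝ)^2 * ν - (n:ℝ)^2) * Real.exp (-4 * ν) = 0 → ν = ν₀) ∧
      ν₀ < (1/2) * (Real.sqrt (σ^2 * (n:ℝ)^4 + 4 * (n:ℝ)^2) - σ * (n:ℝ)^2) ∧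
      (1/2) * (Real.sqrt (σ^2 * (n:ℝ)^4 + 4 * (n:ℝ)^2) - σ * (n:ℝ)^2) ≤ 1/σ := by
  obtain ⟨hσ0, hσ2⟩ := hσ
  have hnR : (n:ℝ) ≠ 0 := Int.cast_ne_zero.mpr hn
  have hN : (0:ℝ) < (n:ℝ)^2 := by positivity
  have habs : (1:ℝ) ≤ |(n:ℝ)| := by
    have h := Int.one_le_abs hn
    calc (1:ℝ) ≤ ((|n| : ℤ) : ℝ) := by exact_mod_cast h
      _ = |(n:ℝ)| := by push_cast; rfl
  have hsqabs : |(n:ℝ)|^2 = (n:ℝ)^2 := sq_abs _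
  have hN1 : (1:ℝ) ≤ (n:ℝ)^2 := by nlinarith
  set s := Real.sqrt (σ^2 * (n:ℝ)^4 + 4 * (n:ℝ)^2) with hs_def
  have hs2 : s^2 = σ^2 * (n:ℝ)^4 + 4 * (n:ℝ)^2 := Real.sq_sqrt (by positivity)
  have hsnn : 0 ≤ s := Real.sqrt_nonneg _
  set r := (1/2) * (s - σ * (n:ℝ)^2) with hr_def
  have hσN : 0 < σ * (n:ℝ)^2 := by positivity
  have hr_pos : 0 < r := by
    rw [hr_def]
    nlinarith [hs2, hsnn, hN, hσN]
  have hrq : r^2 + σ*(n:ℝ)^2*r = (n:ℝ)^2 := by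
    rw [hr_def]; linear_combination (1/4) * hs2
  have hr2 : r^2 < (n:ℝ)^2 := by nlinarith [mul_pos hσN hr_pos]
  have hrm : r < |(n:ℝ)| := by nlinarith [abs_nonneg (n:ℝ)]
  obtain ⟨ν₀, hν₀0, hν₀r, hν₀eq⟩ := exists_root σ ((n:ℝ)^2) r hσ0 hσ2 hN1 hr_pos hrq
  have hν₀m : ν₀ < |(n:ℝ)| := lt_trans hν₀r hrm
  refine ⟨ν₀, ⟨⟨hν₀0, hν₀m⟩, (root_iff σ ((n:ℝ)^2) ν₀).mpr hν₀eq⟩, ?_, hν₀r, ?_⟩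
  · rintro ν ⟨hν0, hνm⟩ hroot
    rw [root_iff σ ((n:ℝ)^2) ν] at hroot
    have hν2 : ν^2 < (n:ℝ)^2 := by
      nlinarith [mul_pos (sub_pos.mpr hνm) (show (0:ℝ) < ν + |(n:ℝ)| by
        nlinarith [abs_nonneg (n:ℝ)])]
    have hν₀2 : ν₀^2 < (n:ℝ)^2 := by
      nlinarith [mul_pos (sub_pos.mpr hν₀m) (show (0:ℝ) < ν₀ + |(n:ℝ)| by
        nlinarith [abs_nonneg (n:ℝ)])]
    rcases lt_trichotomy ν ν₀ with h | h | h
    · exact absurd (uniq_core σ ((n:ℝ)^2) hσ0 hN hν0 hν₀0 hν2 hν₀2 h hroot hν₀eq) not_false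
    · exact h
    · exact absurd (uniq_core σ ((n:ℝ)^2) hσ0 hN hν₀0 hν0 hν₀2 hν2 h hν₀eq hroot) not_false
  · have hσne : σ ≠ 0 := ne_of_gt hσ0
    have hinv : σ * (1/σ) = 1 := mul_one_div_cancel hσne
    have heq : (σ*(n:ℝ)^2 + 2/σ)^2 = σ^2*(n:ℝ)^4 + 4*(n:ℝ)^2 + (2/σ)^2 := by
      linear_combination (4*(n:ℝ)^2) * hinv
    have h1 : σ^2 * (n:ℝ)^4 + 4 * (n:ℝ)^2 ≤ (σ*(n:ℝ)^2 + 2/σ)^2 := by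
      have := sq_nonneg (2/σ); linarith
    have h2 : s ≤ σ*(n:ℝ)^2 + 2/σ := by
      rw [hs_def]
      calc Real.sqrt (σ^2 * (n:ℝ)^4 + 4 * (n:ℝ)^2)
          ≤ Real.sqrt ((σ*(n:ℝ)^2 + 2/σ)^2) := Real.sqrt_le_sqrt h1
        _ = σ*(n:ℝ)^2 + 2/σ := Real.sqrt_sq (by positivity)
    rw [hr_def]
    have h3 : (1/2) * (2/σ) = 1/σ := by ring
    linarith
end

section
/- (Strict concavity) Let σ ∈ (0, 2) and let n be a nonzero integer. Then for every ν ∈ [0, |n|] one has (2 − 16ν + 8σ·n² + 16ν² − 16σ·n²·ν − 16n²)·e^{−4ν} < 2. Equivalently, the second derivative of the function f(ν) = (−ν² − σ·n²·ν + n²) + (ν² − σ·n²·ν − n²)·e^{−4ν} is strictly negative on [0, |n|], so f is strictly concave there. -/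
/-- Strict concavity ingredient: for `σ ∈ (0,2)` and `n ≠ 0`, for every `ν ∈ [0, |n|]`,
`(2 - 16ν + 8σn² + 16ν² - 16σn²ν - 16n²)·e^{-4ν} < 2`. -/
theorem stmt8 (σ : ℝ) (hσ : σ ∈ Set.Ioo (0:ℝ) 2) (n : ℤ) (hn : n ≠ 0) :
    ∀ ν ∈ Set.Icc (0:ℝ) |(n:ℝ)|,
      (2 - 16 * ν + 8 * σ * (n:ℝ)^2 + 16 * ν^2 - 16 * σ * (n:ℝ)^2 * ν - 16 * (n:ℝ)^2)
        * Real.exp (-4 * ν) < 2 := by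
  intro ν hν
  obtain ⟨hν0, hν1⟩ := hν
  obtain ⟨hσ0, hσ2⟩ := hσ
  have hm : (1:ℝ) ≤ (n:ℝ)^2 := by
    have : (1:ℤ) ≤ n^2 := by
      have := sq_pos_of_ne_zero hn
      omega
    exact_mod_cast this
  have hsq : ν^2 ≤ (n:ℝ)^2 := by
    calc ν^2 ≤ |(n:ℝ)|^2 := by
          apply pow_le_pow_left₀ hν0 hν1
      _ = (n:ℝ)^2 := sq_abs _
  have hA : (2 - 16 * ν + 8 * σ * (n:ℝ)^2 + 16 * ν^2 - 16 * σ * (n:ℝ)^2 * ν - 16 * (n:ℝ)^2) < 2 := by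
    nlinarith [mul_nonneg hσ0.le (mul_nonneg (le_trans zero_le_one hm) hν0),
      mul_pos (sub_pos.2 hσ2) (lt_of_lt_of_le one_pos hm),
      mul_nonneg (mul_nonneg (sub_pos.2 hσ2).le (le_trans zero_le_one hm)) hν0]
  have hexp_pos : 0 < Real.exp (-4 * ν) := Real.exp_pos _
  have hexp_le : Real.exp (-4 * ν) ≤ 1 := by
    apply Real.exp_le_one_iff.mpr
    nlinarith
  set A := (2 - 16 * ν + 8 * σ * (n:ℝ)^2 + 16 * ν^2 - 16 * σ * (n:ℝ)^2 * ν - 16 * (n:ℝ)^2)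
  rcases le_or_gt A 0 with h | h
  · calc A * Real.exp (-4 * ν) ≤ 0 := mul_nonpos_of_nonpos_of_nonneg h hexp_pos.le
      _ < 2 := by norm_num
  · calc A * Real.exp (-4 * ν) ≤ A * 1 := by
          exact mul_le_mul_of_nonneg_left hexp_le h.le
      _ = A := mul_one A
      _ < 2 := hA
end

section
/- (Lebeau–Robbiano spectral inequality on the torus) Let a < b be real numbers. There exists a constant C > 0 such that for every real μ > 0 and every family of complex numbers (a_n)_{n ∈ ℤ}, one has ∑_{n ∈ ℤ, |n| ≤ μ} |a_n|² ≤ C·e^{C·μ}·∫_a^b | ∑_{n ∈ ℤ, |n| ≤ μ} a_n·e^{i n x} |² dx. -/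
/-
Let `L = min (b - a) π` and `d = 2N`. Split `[a, a + L]` into `2d + 1` intervals of length `h` and
in every other one pick a point `xᵢ` where `|P|²` is at most its average, so that
`|P(xᵢ)|² ≤ (1/h) ∫ |P|²`. Writing `P(x) = e^{-iNx} Q(e^{ix})` with `deg Q ≤ d`, the nodes
`e^{ixᵢ}` are `(2h/π)|i - j|`-separated on the unit circle, so Lagrange interpolation bounds `Q` on
the whole circle by `(2π/h)^d / d!` times `max |Q(e^{ixᵢ})|`, and Cauchy's estimate bounds every
coefficient `vₙ` of `Q` by the same quantity. Since `(2d+1)^d / d! ≤ e^{2d+1}`, the resulting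
constant grows only exponentially in `N ≤ μ`.
-/

open Finset Polynomial Real
open scoped Nat

theorem Complex.two_div_pi_mul_abs_sub_le_norm_exp_sub {s t : ℝ} (hst : |s - t| ≤ π) :
    2 / π * |s - t| ≤ ‖Complex.exp (Complex.I * s) - Complex.exp (Complex.I * t)‖ := by
  set u := (s - t) / 2
  have hfactor : Complex.exp (Complex.I * s) - Complex.exp (Complex.I * t)
      = Complex.exp (Complex.I * t) * (Complex.exp (Complex.I * ↑(s - t)) - 1) := by
    rw [mul_sub, ← Complex.exp_add]; push_cast; ring_nf
  have hjordan : 2 / π * |u| ≤ Real.sin |u| :=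
    Real.mul_le_sin (abs_nonneg u) (by rw [abs_div, abs_two]; linarith)
  have hsin : Real.sin |u| ≤ |Real.sin u| := by
    rcases abs_cases u with ⟨hu, -⟩ | ⟨hu, -⟩ <;> rw [hu]
    · exact le_abs_self _
    · rw [Real.sin_neg]; exact neg_le_abs _
  have hu : |s - t| = 2 * |u| := by
    rw [abs_div, abs_two]; ring
  rw [hfactor, norm_mul, Complex.norm_exp_I_mul_ofReal, one_mul,
    Complex.norm_exp_I_mul_ofReal_sub_one, norm_mul, Real.norm_eq_abs, Real.norm_eq_abs, abs_two,
    hu]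
  linarith

theorem Polynomial.norm_coeff_le_of_forall_norm_eval_le (Q : ℂ[X]) {M : ℝ}
    (hM : ∀ z : ℂ, ‖z‖ = 1 → ‖Q.eval z‖ ≤ M) (k : ℕ) : ‖Q.coeff k‖ ≤ M := by
  have hderiv : iteratedDeriv k (fun z => Q.eval z) = fun z => (derivative^[k] Q).eval z := by
    induction k with
    | zero => simp
    | succ k ih =>
      rw [iteratedDeriv_succ, ih, Function.iterate_succ_apply']
      funext z
      exact Polynomial.deriv _
  have hcauchy := Complex.norm_iteratedDeriv_le_of_forall_mem_sphere_norm_le (c := 0) k one_pos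
    Q.differentiable.diffContOnCl (fun z hz => hM z (by simpa using hz))
  simp only [hderiv] at hcauchy
  rw [← coeff_zero_eq_eval_zero, coeff_iterate_derivative, zero_add,
    Nat.descFactorial_self, nsmul_eq_mul, norm_mul, one_pow, div_one, Complex.norm_natCast,
    mul_le_mul_iff_right₀ (by positivity)] at hcauchy
  exact hcauchy

theorem Lagrange.norm_eval_le {F ι : Type*} [NormedField F] [DecidableEq ι] {s : Finset ι}
    {z : ι → F} (hz : Set.InjOn z s) {Q : F[X]} (hQ : Q.degree < #s) (y : F) :
    ‖Q.eval y‖ ≤ ∑ i ∈ s, ‖Q.eval (z i)‖ * ∏ j ∈ s.erase i, ‖y - z j‖ / ‖z i - z j‖ := by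
  conv_lhs => rw [Lagrange.eq_interpolate hz hQ, Lagrange.interpolate_apply, eval_finsetSum]
  refine (norm_sum_le _ _).trans (le_of_eq (sum_congr rfl fun i _ => ?_))
  simp only [eval_mul, eval_C, Lagrange.basis, Lagrange.basisDivisor, eval_prod, eval_sub, eval_X,
    norm_mul, norm_prod, norm_inv]
  congr 1
  exact prod_congr rfl fun j _ => by rw [div_eq_inv_mul]

theorem Nat.prod_erase_range_dist {d i : ℕ} (hid : i ≤ d) :
    ∏ j ∈ (range (d + 1)).erase i, Nat.dist i j = i ! * (d - i)! := by
  induction d, hid using Nat.le_induction with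
  | base =>
    rw [range_add_one, erase_insert notMem_range_self, Nat.sub_self, Nat.factorial_zero, mul_one,
      ← prod_range_add_one_eq_factorial, ← prod_range_reflect]
    exact prod_congr rfl fun j hj => by
      rw [Nat.dist_eq_sub_of_le_right (by simp at hj; omega)]; simp at hj; omega
  | succ d hid ih =>
    rw [range_add_one, erase_insert_of_ne (by omega), prod_insert (by simp), ih,
      Nat.dist_eq_sub_of_le (by omega), show d + 1 - i = d - i + 1 by omega, Nat.factorial_succ]
    ring

theorem sum_range_inv_factorial_mul_factorial (d : ℕ) :
    ∑ i ∈ range (d + 1), ((i ! * (d - i)! : ℕ) : ℝ)⁻¹ = 2 ^ d / d ! := by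
  rw [eq_div_iff (by positivity), sum_mul]
  have hchoose : ∀ i ∈ range (d + 1), ((i ! * (d - i)! : ℕ) : ℝ)⁻¹ * d ! = d.choose i := by
    intro i hi
    rw [Nat.cast_choose ℝ (by simp at hi; omega)]
    push_cast
    ring
  rw [sum_congr rfl hchoose]
  exact_mod_cast Nat.sum_range_choose d

theorem Lagrange.norm_eval_le_of_separated {F : Type*} [NormedField F] {d : ℕ} {z : ℕ → F}
    {ρ M : ℝ} (hρ : 0 < ρ) (hz : ∀ i ≤ d, ‖z i‖ ≤ 1)
    (hsep : ∀ i ≤ d, ∀ j ≤ d, ρ * Nat.dist i j ≤ ‖z i - z j‖) {Q : F[X]}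
    (hQ : Q.degree < ↑(d + 1)) (hM : ∀ i ≤ d, ‖Q.eval (z i)‖ ≤ M) {y : F} (hy : ‖y‖ ≤ 1) :
    ‖Q.eval y‖ ≤ M * (4 / ρ) ^ d / d ! := by
  have hrange : ∀ {i}, i ∈ range (d + 1) ↔ i ≤ d := by simp
  have hdist : ∀ {i j}, i ≠ j → 0 < ρ * Nat.dist i j := fun hij => by
    have := Nat.dist_pos_of_ne hij; positivity
  have hinj : Set.InjOn z (range (d + 1)) := by
    intro i hi j hj hzij
    by_contra hij
    have := hsep i (hrange.1 hi) j (hrange.1 hj)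
    rw [hzij, sub_self, norm_zero] at this
    exact (hdist hij).not_ge this
  have hterm : ∀ i ∈ range (d + 1), ‖Q.eval (z i)‖ *
      ∏ j ∈ (range (d + 1)).erase i, ‖y - z j‖ / ‖z i - z j‖
        ≤ M * (2 / ρ) ^ d * ((i ! * (d - i)! : ℕ) : ℝ)⁻¹ := by
    intro i hi
    have hprod : ∏ j ∈ (range (d + 1)).erase i, ‖y - z j‖ / ‖z i - z j‖
        ≤ ∏ j ∈ (range (d + 1)).erase i, 2 / ρ * (Nat.dist i j : ℝ)⁻¹ := by
      refine prod_le_prod (fun _ _ => by positivity) fun j hj => ?_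
      obtain ⟨hji, hj⟩ := mem_erase.1 hj
      have hyz : ‖y - z j‖ ≤ 2 := (norm_sub_le _ _).trans (by linarith [hz j (hrange.1 hj)])
      calc ‖y - z j‖ / ‖z i - z j‖ ≤ 2 / (ρ * Nat.dist i j) :=
            div_le_div₀ zero_le_two hyz (hdist hji.symm) (hsep i (hrange.1 hi) j (hrange.1 hj))
        _ = 2 / ρ * (Nat.dist i j : ℝ)⁻¹ := by ring
    rw [prod_mul_distrib, prod_const, card_erase_of_mem hi, card_range, Nat.add_sub_cancel,
      prod_inv_distrib, ← Nat.cast_prod, Nat.prod_erase_range_dist (hrange.1 hi)]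
      at hprod
    rw [mul_assoc]
    exact mul_le_mul (hM i (hrange.1 hi)) hprod (by positivity)
      ((norm_nonneg _).trans (hM i (hrange.1 hi)))
  calc ‖Q.eval y‖
      ≤ ∑ i ∈ range (d + 1), ‖Q.eval (z i)‖ *
          ∏ j ∈ (range (d + 1)).erase i, ‖y - z j‖ / ‖z i - z j‖ :=
        Lagrange.norm_eval_le hinj (by rwa [card_range]) y
    _ ≤ ∑ i ∈ range (d + 1), M * (2 / ρ) ^ d * ((i ! * (d - i)! : ℕ) : ℝ)⁻¹ := sum_le_sum hterm
    _ = M * (4 / ρ) ^ d / d ! := by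
        rw [← mul_sum, sum_range_inv_factorial_mul_factorial, show (4 / ρ) = 2 / ρ * 2 by ring,
          mul_pow]
        ring

theorem ContinuousOn.exists_mul_sub_le_intervalIntegral {g : ℝ → ℝ} {c e : ℝ} (hce : c ≤ e)
    (hg : ContinuousOn g (Set.Icc c e)) : ∃ x ∈ Set.Icc c e, g x * (e - c) ≤ ∫ t in c..e, g t := by
  obtain ⟨x, hx, hmin⟩ := isCompact_Icc.exists_isMinOn (Set.nonempty_Icc.2 hce) hg
  refine ⟨x, hx, ?_⟩
  have := intervalIntegral.integral_mono_on (μ := MeasureTheory.volume) hce intervalIntegrable_const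
    (hg.intervalIntegrable_of_Icc hce) fun t ht => hmin ht
  rwa [intervalIntegral.integral_const, smul_eq_mul, mul_comm] at this

theorem exists_separated_points_mul_le_intervalIntegral {g : ℝ → ℝ} (hg : Continuous g)
    (hg0 : ∀ x, 0 ≤ g x) (a : ℝ) {L : ℝ} (hL : 0 < L) (d : ℕ) :
    ∃ x : ℕ → ℝ, ∀ i ≤ d, g (x i) * (L / (2 * d + 1)) ≤ ∫ t in a..a + L, g t ∧
      ∀ j ≤ d, Nat.dist i j * (L / (2 * d + 1)) ≤ |x i - x j| ∧ |x i - x j| ≤ L := by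
  set h := L / (2 * d + 1)
  have hh : 0 < h := by positivity
  have hLh : (2 * d + 1) * h = L := mul_div_cancel₀ _ (by positivity)
  choose x hx hxg using fun i : ℕ => hg.continuousOn.exists_mul_sub_le_intervalIntegral
    (c := a + 2 * i * h) (e := a + 2 * i * h + h) (by linarith)
  simp only [add_sub_cancel_left] at hxg
  refine ⟨x, fun i hi => ⟨(hxg i).trans ?_, fun j hj => ?_⟩⟩
  · have hi' : (i : ℝ) ≤ d := by exact_mod_cast hi
    exact intervalIntegral.integral_mono_interval (by nlinarith) (by linarith) (by nlinarith)
      (.of_forall hg0) (hg.intervalIntegrable _ _)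
  wlog hij : i ≤ j generalizing i j
  · rw [Nat.dist_comm, abs_sub_comm]
    exact this j hj i hi (le_of_not_ge hij)
  rcases hij.eq_or_lt with rfl | hlt
  · simp [hL.le]
  have hj' : (j : ℝ) ≤ d := by exact_mod_cast hj
  have hi0 : (0 : ℝ) ≤ i := Nat.cast_nonneg i
  have hlt' : (i : ℝ) + 1 ≤ j := by exact_mod_cast hlt
  obtain ⟨hxi, hxi'⟩ := hx i
  obtain ⟨hxj, hxj'⟩ := hx j
  have hdist : (Nat.dist i j : ℝ) = j - i := by
    rw [Nat.dist_comm, Nat.dist_eq_sub_of_le_right hlt.le, Nat.cast_sub hlt.le]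
  rw [abs_sub_comm, abs_of_nonneg (by nlinarith), hdist]
  constructor <;> nlinarith

theorem lagrange_constant_le {L : ℝ} (hL : 0 < L) (hLπ : L ≤ π) (d : ℕ) :
    (d + 1) * ((2 * π * (2 * d + 1) / L) ^ d / d !) ^ 2 * ((2 * d + 1) / L)
      ≤ ((2 * π * exp 4 / L) ^ 2) ^ (d + 1) := by
  set K := 2 * π / L
  have hK : 1 ≤ K := by rw [le_div_iff₀ hL]; linarith [pi_pos]
  have hfac : (2 * d + 1 : ℝ) ^ d / d ! ≤ exp (2 * d + 1) :=
    pow_div_factorial_le_exp _ (by positivity) d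
  have hdiv : (2 * d + 1 : ℝ) / L ≤ exp (2 * d) * K := by
    calc (2 * d + 1 : ℝ) / L ≤ (2 * d + 1) * K := by
          rw [div_le_iff₀ hL, mul_assoc, div_mul_cancel₀ _ hL.ne']; nlinarith [pi_gt_three]
      _ ≤ exp (2 * d) * K := by gcongr; exact add_one_le_exp _
  have hexp : exp d * exp (2 * d + 1) ^ 2 * exp (2 * d) ≤ exp 4 ^ (2 * (d + 1)) := by
    rw [← exp_nat_mul, ← exp_nat_mul, ← exp_add, ← exp_add, exp_le_exp]
    push_cast
    linarith
  calc (d + 1) * ((2 * π * (2 * d + 1) / L) ^ d / d !) ^ 2 * ((2 * d + 1) / L)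
      = (d + 1) * (K ^ d * ((2 * d + 1) ^ d / d !)) ^ 2 * ((2 * d + 1) / L) := by
        rw [mul_div_right_comm, mul_pow, mul_div_assoc]
    _ ≤ exp d * (K ^ d * exp (2 * d + 1)) ^ 2 * (exp (2 * d) * K) := by
        gcongr
        exact add_one_le_exp _
    _ = K ^ (2 * d + 1) * (exp d * exp (2 * d + 1) ^ 2 * exp (2 * d)) := by ring
    _ ≤ K ^ (2 * (d + 1)) * exp 4 ^ (2 * (d + 1)) := by
        gcongr
        omega
    _ = ((2 * π * exp 4 / L) ^ 2) ^ (d + 1) := by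
        rw [← mul_pow, pow_mul, mul_div_right_comm]

theorem pow_two_mul_add_one_le_sq_mul_exp {E μ : ℝ} (hE : 1 ≤ E) {N : ℕ} (hN : (N : ℝ) ≤ μ) :
    E ^ (2 * N + 1) ≤ E ^ 2 * exp (E ^ 2 * μ) := by
  have hμ : 0 ≤ μ := (Nat.cast_nonneg N).trans hN
  have hlog0 : 0 ≤ 2 * log E := by linarith [log_nonneg hE]
  have hlog : 2 * log E ≤ E ^ 2 := by
    nlinarith [log_le_sub_one_of_pos (zero_lt_one.trans_le hE)]
  calc E ^ (2 * N + 1) ≤ E ^ 2 * E ^ (2 * N) := by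
        rw [← pow_add]; exact pow_le_pow_right₀ hE (by omega)
    _ = E ^ 2 * exp (N * (2 * log E)) := by
        rw [exp_nat_mul, mul_comm 2 (log E), exp_mul, exp_log (by linarith), rpow_two, ← pow_mul]
    _ ≤ E ^ 2 * exp (E ^ 2 * μ) := by
        gcongr E ^ 2 * exp ?_
        nlinarith [mul_le_mul hN hlog hlog0 hμ]

noncomputable section

def trigPoly (N : ℕ) (v : ℤ → ℂ) (x : ℝ) : ℂ :=
  ∑ n ∈ Icc (-(N : ℤ)) N, v n * Complex.exp (Complex.I * n * x)

theorem continuous_trigPoly (N : ℕ) (v : ℤ → ℂ) : Continuous (trigPoly N v) := by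
  unfold trigPoly; fun_prop

def trigPoly.toPolynomial (N : ℕ) (v : ℤ → ℂ) : ℂ[X] :=
  ∑ n ∈ Icc (-(N : ℤ)) N, C (v n) * X ^ (n + N).toNat

end

namespace trigPoly

variable {N : ℕ} {v : ℤ → ℂ}

theorem degree_toPolynomial_lt : (toPolynomial N v).degree < ↑(2 * N + 1) := by
  refine (degree_sum_le _ _).trans_lt
    ((Finset.sup_lt_iff (WithBot.bot_lt_coe _)).2 fun n hn => ?_)
  refine (degree_C_mul_X_pow_le _ _).trans_lt (WithBot.coe_lt_coe.2 ?_)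
  simp only [mem_Icc] at hn
  norm_cast
  omega

theorem coeff_toPolynomial {n : ℤ} (hn : n ∈ Icc (-(N : ℤ)) N) :
    (toPolynomial N v).coeff (n + N).toNat = v n := by
  rw [toPolynomial, finsetSum_coeff, sum_eq_single n]
  · simp
  · intro m hm hmn
    simp only [mem_Icc] at hm hn
    rw [coeff_C_mul_X_pow, if_neg (by omega)]
  · exact fun h => absurd hn h

theorem eval_toPolynomial_exp (x : ℝ) :
    (toPolynomial N v).eval (Complex.exp (Complex.I * x))
      = Complex.exp (Complex.I * N * x) * trigPoly N v x := by
  rw [toPolynomial, eval_finsetSum, trigPoly, mul_sum]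
  refine sum_congr rfl fun n hn => ?_
  simp only [mem_Icc] at hn
  have hexp : ((n + N).toNat : ℂ) = n + N := by
    exact_mod_cast Int.toNat_of_nonneg (by omega)
  rw [eval_mul, eval_C, eval_pow, eval_X, ← Complex.exp_nat_mul, hexp,
    mul_left_comm (Complex.exp _), ← Complex.exp_add]
  ring_nf

theorem norm_eval_toPolynomial_exp (x : ℝ) :
    ‖(toPolynomial N v).eval (Complex.exp (Complex.I * x))‖ = ‖trigPoly N v x‖ := by
  rw [eval_toPolynomial_exp, norm_mul, mul_assoc, ← Complex.ofReal_natCast, ← Complex.ofReal_mul,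
    Complex.norm_exp_I_mul_ofReal, one_mul]

theorem norm_coeff_le_of_nodes {x : ℕ → ℝ} {h M : ℝ} (hh : 0 < h)
    (hsep : ∀ i ≤ 2 * N, ∀ j ≤ 2 * N, Nat.dist i j * h ≤ |x i - x j| ∧ |x i - x j| ≤ π)
    (hM : ∀ i ≤ 2 * N, ‖trigPoly N v (x i)‖ ≤ M) {n : ℤ} (hn : n ∈ Icc (-(N : ℤ)) N) :
    ‖v n‖ ≤ M * (2 * π / h) ^ (2 * N) / (2 * N)! := by
  set z : ℕ → ℂ := fun i => Complex.exp (Complex.I * x i)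
  have hz : ∀ i ≤ 2 * N, ‖z i‖ ≤ 1 := fun i _ => (Complex.norm_exp_I_mul_ofReal _).le
  have hzsep : ∀ i ≤ 2 * N, ∀ j ≤ 2 * N, 2 / π * h * Nat.dist i j ≤ ‖z i - z j‖ := by
    intro i hi j hj
    obtain ⟨hlow, hup⟩ := hsep i hi j hj
    calc 2 / π * h * Nat.dist i j = 2 / π * (Nat.dist i j * h) := by ring
      _ ≤ 2 / π * |x i - x j| := by gcongr
      _ ≤ ‖z i - z j‖ := Complex.two_div_pi_mul_abs_sub_le_norm_exp_sub hup
  have hcircle : ∀ y : ℂ, ‖y‖ = 1 →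
      ‖(toPolynomial N v).eval y‖ ≤ M * (4 / (2 / π * h)) ^ (2 * N) / (2 * N)! :=
    fun y hy => Lagrange.norm_eval_le_of_separated (by positivity) hz hzsep degree_toPolynomial_lt
      (fun i hi => (norm_eval_toPolynomial_exp (x i)).trans_le (hM i hi)) hy.le
  rw [← coeff_toPolynomial (v := v) hn]
  convert (toPolynomial N v).norm_coeff_le_of_forall_norm_eval_le hcircle _ using 4
  field_simp
  ring

theorem sum_norm_sq_le {L : ℝ} (hL : 0 < L) (hLπ : L ≤ π) (a : ℝ) (N : ℕ) (v : ℤ → ℂ) :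
    ∑ n ∈ Icc (-(N : ℤ)) N, ‖v n‖ ^ 2
      ≤ ((2 * π * exp 4 / L) ^ 2) ^ (2 * N + 1) * ∫ x in a..a + L, ‖trigPoly N v x‖ ^ 2 := by
  set d := 2 * N
  set J := ∫ x in a..a + L, ‖trigPoly N v x‖ ^ 2
  set h := L / (2 * d + 1)
  have hh : 0 < h := by positivity
  have hJ : 0 ≤ J := intervalIntegral.integral_nonneg (by linarith) fun _ _ => by positivity
  obtain ⟨x, hx⟩ := exists_separated_points_mul_le_intervalIntegral
    ((continuous_trigPoly N v).norm.pow 2) (fun _ => sq_nonneg _) a hL d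
  set M := √(J / h)
  have hM : ∀ i ≤ d, ‖trigPoly N v (x i)‖ ≤ M := fun i hi =>
    le_sqrt_of_sq_le ((le_div_iff₀ hh).2 (hx i hi).1)
  have hcoeff : ∀ n ∈ Icc (-(N : ℤ)) N, ‖v n‖ ≤ M * (2 * π / h) ^ d / d ! :=
    fun n hn => norm_coeff_le_of_nodes hh
      (fun i hi j hj => ⟨((hx i hi).2 j hj).1, ((hx i hi).2 j hj).2.trans hLπ⟩) hM hn
  have hcard : #(Icc (-(N : ℤ)) N) = d + 1 := by simp only [Int.card_Icc]; omega
  calc ∑ n ∈ Icc (-(N : ℤ)) N, ‖v n‖ ^ 2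
      ≤ ∑ _n ∈ Icc (-(N : ℤ)) N, (M * (2 * π / h) ^ d / d !) ^ 2 :=
        sum_le_sum fun n hn => pow_le_pow_left₀ (norm_nonneg _) (hcoeff n hn) 2
    _ = (d + 1) * ((2 * π * (2 * d + 1) / L) ^ d / d !) ^ 2 * ((2 * d + 1) / L) * J := by
        rw [sum_const, hcard, nsmul_eq_mul, mul_div_assoc, mul_pow, sq_sqrt (by positivity)]
        simp only [h]
        field_simp
        push_cast
        ring
    _ ≤ ((2 * π * exp 4 / L) ^ 2) ^ (2 * N + 1) * J :=
        mul_le_mul_of_nonneg_right (lagrange_constant_le hL hLπ d) hJ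

end trigPoly

/-- Lebeau–Robbiano spectral inequality on the torus: for `a < b` there is `C > 0` such that
for every `μ > 0` and every family `(v_n)_{n ∈ ℤ}` of complex numbers,
`∑_{|n| ≤ μ} |v_n|² ≤ C e^{Cμ} ∫_a^b |∑_{|n| ≤ μ} v_n e^{inx}|² dx`.
(Here the integers `n` with `|n| ≤ μ` are exactly those in `Finset.Icc (-⌊μ⌋) ⌊μ⌋`.) -/
theorem stmt14 (a b : ℝ) (hab : a < b) :
    ∃ C > (0:ℝ), ∀ (μ : ℝ), 0 < μ → ∀ v : ℤ → ℂ,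
      (∑ n ∈ Finset.Icc (-⌊μ⌋) ⌊μ⌋, ‖v n‖ ^ 2)
        ≤ C * Real.exp (C * μ) *
          ∫ x in a..b,
            ‖∑ n ∈ Finset.Icc (-⌊μ⌋) ⌊μ⌋,
              v n * Complex.exp (Complex.I * (n:ℂ) * (x:ℂ))‖ ^ 2 := by
  set L := min (b - a) π
  have hL : 0 < L := lt_min (sub_pos.2 hab) pi_pos
  have hLb : a + L ≤ b := by linarith [min_le_left (b - a) π]
  set E := (2 * π * exp 4 / L) ^ 2
  have hE : 1 ≤ E := one_le_pow₀ ((one_le_div hL).2 (by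
    nlinarith [min_le_right (b - a) π, pi_gt_three, add_one_le_exp 4]))
  refine ⟨E ^ 2, by positivity, fun μ hμ v => ?_⟩
  obtain ⟨N, hN⟩ := Int.eq_ofNat_of_zero_le (Int.floor_nonneg.2 hμ.le)
  have hNμ : (N : ℝ) ≤ μ := by exact_mod_cast hN ▸ Int.floor_le μ
  have hsq : Continuous fun x => ‖trigPoly N v x‖ ^ 2 := (continuous_trigPoly N v).norm.pow 2
  rw [hN]
  calc ∑ n ∈ Icc (-(N : ℤ)) N, ‖v n‖ ^ 2
      ≤ E ^ (2 * N + 1) * ∫ x in a..a + L, ‖trigPoly N v x‖ ^ 2 :=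
        trigPoly.sum_norm_sq_le hL (min_le_right _ _) a N v
    _ ≤ E ^ 2 * exp (E ^ 2 * μ) * ∫ x in a..b, ‖trigPoly N v x‖ ^ 2 :=
        mul_le_mul (pow_two_mul_add_one_le_sq_mul_exp hE hNμ)
          (intervalIntegral.integral_mono_interval le_rfl (by linarith) hLb
            (.of_forall fun _ => by positivity) (hsq.intervalIntegrable _ _))
          (intervalIntegral.integral_nonneg (by linarith) fun _ _ => by positivity) (by positivity)
end

section
/- (Energy dissipation for the linearized Stefan problem) Let σ > 0. Let y : ℝ × ℝ × ℝ → ℝ and h : ℝ × ℝ → ℝ be smooth functions that are 2π-periodic in the variable x₁, and suppose that for all t ∈ ℝ, all x₁ ∈ ℝ, and all x₂ ∈ [−1, 1]: ∂_t y(t, x₁, x₂) = ∂²_{x₁} y(t, x₁, x₂) + ∂²_{x₂} y(t, x₁, x₂); ∂_t h(t, x₁) = ∂_{x₂} y(t, x₁, 1); y(t, x₁, −1) = 0; and y(t, x₁, 1) = σ·∂²_{x₁} h(t, x₁). Define the energy E(t) = ∫_0^{2π} ∫_{−1}^{1} y(t, x₁, x₂)² dx₂ dx₁ + σ·∫_0^{2π}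 (∂_{x₁} h(t, x₁))² dx₁. Then for every t ∈ ℝ, E is differentiable at t with E'(t) = −2·∫_0^{2π} ∫_{−1}^{1} ( (∂_{x₁} y(t, x₁, x₂))² + (∂_{x₂} y(t, x₁, x₂))² ) dx₂ dx₁. -/
open Real

open MeasureTheory intervalIntegral Metric

noncomputable def pd {E : Type*} [NormedAddCommGroup E] [NormedSpace ℝ E]
    (v : E) (F : E → ℝ) : E → ℝ := fun p => fderiv ℝ F p v

lemma pd_contDiff {E : Type*} [NormedAddCommGroup E] [NormedSpace ℝ E]
    {F : E → ℝ} (hF : ContDiff ℝ (⊤ : ℕ∞) F) (v : E) : ContDiff ℝ (⊤ : ℕ∞) (pd v F) :=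
  (hF.fderiv_right (by simp)).clm_apply contDiff_const

lemma hasDerivAt_along {E : Type*} [NormedAddCommGroup E] [NormedSpace ℝ E]
    {F : E → ℝ} (hF : ContDiff ℝ (⊤ : ℕ∞) F) {γ : ℝ → E} {v : E} {x : ℝ}
    (hγ : HasDerivAt γ v x) : HasDerivAt (fun s => F (γ s)) (pd v F (γ x)) x :=
  ((hF.differentiable (by simp) (γ x)).hasFDerivAt).comp_hasDerivAt x hγ

lemma pd_comm {E : Type*} [NormedAddCommGroup E] [NormedSpace ℝ E]
    {F : E → ℝ} (hF : ContDiff ℝ (⊤ : ℕ∞) F) (u v p : E) :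
    pd u (pd v F) p = pd v (pd u F) p := by
  have hd : ∀ q, HasFDerivAt F (fderiv ℝ F q) q :=
    fun q => (hF.differentiable (by simp) q).hasFDerivAt
  have h2 : HasFDerivAt (fderiv ℝ F) (fderiv ℝ (fderiv ℝ F) p) p :=
    (((hF.fderiv_right (m := (⊤ : ℕ∞)) (by simp)).differentiable (by simp)) p).hasFDerivAt
  have sym := second_derivative_symmetric hd h2
  have key : ∀ w : E, HasFDerivAt (fun q => fderiv ℝ F q w)
      ((ContinuousLinearMap.apply ℝ ℝ w).comp (fderiv ℝ (fderiv ℝ F) p)) p :=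
    fun w => (ContinuousLinearMap.apply ℝ ℝ w).hasFDerivAt.comp p h2
  have e1 : pd u (pd v F) p = fderiv ℝ (fderiv ℝ F) p u v := by
    have hthis := (key v).fderiv
    have h0 : pd v F = fun q => fderiv ℝ F q v := rfl
    show fderiv ℝ (pd v F) p u = _
    rw [h0, hthis]; rfl
  have e2 : pd v (pd u F) p = fderiv ℝ (fderiv ℝ F) p v u := by
    have hthis := (key u).fderiv
    have h0 : pd u F = fun q => fderiv ℝ F q u := rfl
    show fderiv ℝ (pd u F) p v = _
    rw [h0, hthis]; rfl
  rw [e1, e2, sym u v]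

lemma deriv_periodic {f : ℝ → ℝ} {c : ℝ} (hf : ∀ x, f (x + c) = f x) (x : ℝ) :
    deriv f (x + c) = deriv f x := by
  rw [← deriv_comp_add_const f c x]
  congr 1
  exact funext hf

lemma hasDerivAt_param_integral (F F' : ℝ → ℝ → ℝ) (a b t : ℝ)
    (hF : Continuous fun p : ℝ × ℝ => F p.1 p.2)
    (hF' : Continuous fun p : ℝ × ℝ => F' p.1 p.2)
    (hd : ∀ s x, HasDerivAt (fun u => F u x) (F' s x) s) :
    HasDerivAt (fun s => ∫ x in a..b, F s x) (∫ x in a..b, F' t x) t := by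
  obtain ⟨C, hC⟩ : ∃ C, ∀ p ∈ (closedBall t 1) ×ˢ (Set.uIcc a b), ‖F' p.1 p.2‖ ≤ C :=
    ((isCompact_closedBall t 1).prod isCompact_uIcc).exists_bound_of_continuousOn
      hF'.continuousOn
  refine (intervalIntegral.hasDerivAt_integral_of_dominated_loc_of_deriv_le
    (F := F) (F' := F') (bound := fun _ => C) (ball_mem_nhds t one_pos) ?_ ?_ ?_ ?_ ?_ ?_).2
  · exact Filter.Eventually.of_forall fun s =>
      (hF.comp (continuous_const.prodMk continuous_id)).aestronglyMeasurable
  · exact ((hF.comp (continuous_const.prodMk continuous_id)) :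
      Continuous fun x => F t x).intervalIntegrable a b
  · exact (hF'.comp (continuous_const.prodMk continuous_id)).aestronglyMeasurable
  · refine Filter.Eventually.of_forall fun x hx s hs => hC (s, x) ?_
    exact ⟨ball_subset_closedBall hs, Set.uIoc_subset_uIcc hx⟩
  · exact intervalIntegrable_const
  · exact Filter.Eventually.of_forall fun x _ s _ => hd s x

abbrev pe1 : ℝ × ℝ × ℝ := (1, 0, 0)
abbrev pe2 : ℝ × ℝ × ℝ := (0, 1, 0)
abbrev pe3 : ℝ × ℝ × ℝ := (0, 0, 1)
abbrev pv1 : ℝ × ℝ := (1, 0)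
abbrev pv2 : ℝ × ℝ := (0, 1)

/-- Energy dissipation for the linearized Stefan problem with surface tension `σ > 0` on the
strip `𝕋 × (-1,1)` (periodicity realized as `2π`-periodicity in `x₁`): if `(y, h)` is a smooth
solution of `∂ₜy = ∂²_{x₁}y + ∂²_{x₂}y`, `∂ₜh = ∂_{x₂}y(·,·,1)`, `y(·,·,-1) = 0`,
`y(·,·,1) = σ∂²_{x₁}h`, then the energy
`E(t) = ∫₀^{2π}∫_{-1}^1 y² + σ∫₀^{2π}(∂_{x₁}h)²` satisfies
`E'(t) = -2∫₀^{2π}∫_{-1}^1 ((∂_{x₁}y)² + (∂_{x₂}y)²)`. -/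
theorem stmt15 (σ : ℝ) (hσ : 0 < σ)
    (y : ℝ → ℝ → ℝ → ℝ) (h : ℝ → ℝ → ℝ)
    (hy : ContDiff ℝ (⊤ : ℕ∞) (fun p : ℝ × ℝ × ℝ => y p.1 p.2.1 p.2.2))
    (hh : ContDiff ℝ (⊤ : ℕ∞) (fun p : ℝ × ℝ => h p.1 p.2))
    (hyper : ∀ t x₁ x₂ : ℝ, y t (x₁ + 2 * Real.pi) x₂ = y t x₁ x₂)
    (hhper : ∀ t x₁ : ℝ, h t (x₁ + 2 * Real.pi) = h t x₁)
    (heat : ∀ t x₁ : ℝ, ∀ x₂ ∈ Set.Icc (-1:ℝ) 1,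
      deriv (fun s => y s x₁ x₂) t
        = deriv (deriv (fun a => y t a x₂)) x₁ + deriv (deriv (fun b => y t x₁ b)) x₂)
    (hstefan : ∀ t x₁ : ℝ, deriv (fun s => h s x₁) t = deriv (fun b => y t x₁ b) 1)
    (hdir : ∀ t x₁ : ℝ, y t x₁ (-1) = 0)
    (hgt : ∀ t x₁ : ℝ, y t x₁ 1 = σ * deriv (deriv (fun a => h t a)) x₁) :
    ∀ t : ℝ,
      HasDerivAt
        (fun s =>
          (∫ x₁ in (0:ℝ)..(2 * Real.pi), ∫ x₂ in (-1:ℝ)..1, (y s x₁ x₂)^2)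
            + σ * ∫ x₁ in (0:ℝ)..(2 * Real.pi), (deriv (fun a => h s a) x₁)^2)
        (-2 * ∫ x₁ in (0:ℝ)..(2 * Real.pi), ∫ x₂ in (-1:ℝ)..1,
          ((deriv (fun a => y t a x₂) x₁)^2 + (deriv (fun b => y t x₁ b) x₂)^2)) t := by
  intro t
  set Y : ℝ × ℝ × ℝ → ℝ := fun p => y p.1 p.2.1 p.2.2 with hYdef
  set H : ℝ × ℝ → ℝ := fun p => h p.1 p.2 with hHdef
  -- smoothness of partial derivatives
  have hY1c : ContDiff ℝ (⊤ : ℕ∞) (pd pe1 Y) := pd_contDiff hy pe1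
  have hY2c : ContDiff ℝ (⊤ : ℕ∞) (pd pe2 Y) := pd_contDiff hy pe2
  have hY3c : ContDiff ℝ (⊤ : ℕ∞) (pd pe3 Y) := pd_contDiff hy pe3
  have hY22c : ContDiff ℝ (⊤ : ℕ∞) (pd pe2 (pd pe2 Y)) := pd_contDiff hY2c pe2
  have hY33c : ContDiff ℝ (⊤ : ℕ∞) (pd pe3 (pd pe3 Y)) := pd_contDiff hY3c pe3
  have hH1c : ContDiff ℝ (⊤ : ℕ∞) (pd pv1 H) := pd_contDiff hh pv1
  have hH2c : ContDiff ℝ (⊤ : ℕ∞) (pd pv2 H) := pd_contDiff hh pv2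
  have hH22c : ContDiff ℝ (⊤ : ℕ∞) (pd pv2 (pd pv2 H)) := pd_contDiff hH2c pv2
  have hH21c : ContDiff ℝ (⊤ : ℕ∞) (pd pv2 (pd pv1 H)) := pd_contDiff hH1c pv2
  have hH12c : ContDiff ℝ (⊤ : ℕ∞) (pd pv1 (pd pv2 H)) := pd_contDiff hH2c pv1
  have cY : Continuous Y := hy.continuous
  have cY1 : Continuous (pd pe1 Y) := hY1c.continuous
  have cY2 : Continuous (pd pe2 Y) := hY2c.continuous
  have cY3 : Continuous (pd pe3 Y) := hY3c.continuous
  have cY22 : Continuous (pd pe2 (pd pe2 Y)) := hY22c.continuous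
  have cY33 : Continuous (pd pe3 (pd pe3 Y)) := hY33c.continuous
  have cH1 : Continuous (pd pv1 H) := hH1c.continuous
  have cH2 : Continuous (pd pv2 H) := hH2c.continuous
  have cH22 : Continuous (pd pv2 (pd pv2 H)) := hH22c.continuous
  have cH21 : Continuous (pd pv2 (pd pv1 H)) := hH21c.continuous
  have cH12 : Continuous (pd pv1 (pd pv2 H)) := hH12c.continuous
  -- straight lines
  have lineT : ∀ (X1 X2 T : ℝ), HasDerivAt (fun s : ℝ => ((s, X1, X2) : ℝ × ℝ × ℝ)) pe1 T :=
    fun X1 X2 T => (hasDerivAt_id T).prodMk ((hasDerivAt_const T X1).prodMk (hasDerivAt_const T X2))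
  have lineA : ∀ (T X2 a : ℝ), HasDerivAt (fun a' : ℝ => ((T, a', X2) : ℝ × ℝ × ℝ)) pe2 a :=
    fun T X2 a => (hasDerivAt_const a T).prodMk ((hasDerivAt_id a).prodMk (hasDerivAt_const a X2))
  have lineB : ∀ (T X1 b : ℝ), HasDerivAt (fun b' : ℝ => ((T, X1, b') : ℝ × ℝ × ℝ)) pe3 b :=
    fun T X1 b => (hasDerivAt_const b T).prodMk ((hasDerivAt_const b X1).prodMk (hasDerivAt_id b))
  have lineS : ∀ (X1 T : ℝ), HasDerivAt (fun s : ℝ => ((s, X1) : ℝ × ℝ)) pv1 T :=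
    fun X1 T => (hasDerivAt_id T).prodMk (hasDerivAt_const T X1)
  have lineX : ∀ (T a : ℝ), HasDerivAt (fun a' : ℝ => ((T, a') : ℝ × ℝ)) pv2 a :=
    fun T a => (hasDerivAt_const a T).prodMk (hasDerivAt_id a)
  -- translation of `deriv`s into `pd`s
  have dT : ∀ (T X1 X2 : ℝ), deriv (fun s => y s X1 X2) T = pd pe1 Y (T, X1, X2) :=
    fun T X1 X2 => (hasDerivAt_along hy (lineT X1 X2 T)).deriv
  have dA : ∀ (T X1 X2 : ℝ), deriv (fun a => y T a X2) X1 = pd pe2 Y (T, X1, X2) :=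
    fun T X1 X2 => (hasDerivAt_along hy (lineA T X2 X1)).deriv
  have dB : ∀ (T X1 X2 : ℝ), deriv (fun b => y T X1 b) X2 = pd pe3 Y (T, X1, X2) :=
    fun T X1 X2 => (hasDerivAt_along hy (lineB T X1 X2)).deriv
  have dAA : ∀ (T X1 X2 : ℝ),
      deriv (deriv (fun a => y T a X2)) X1 = pd pe2 (pd pe2 Y) (T, X1, X2) := by
    intro T X1 X2
    have h1 : deriv (fun a => y T a X2) = fun a => pd pe2 Y (T, a, X2) :=
      funext fun a => dA T a X2
    rw [h1]
    exact (hasDerivAt_along hY2c (lineA T X2 X1)).deriv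
  have dBB : ∀ (T X1 X2 : ℝ),
      deriv (deriv (fun b => y T X1 b)) X2 = pd pe3 (pd pe3 Y) (T, X1, X2) := by
    intro T X1 X2
    have h1 : deriv (fun b => y T X1 b) = fun b => pd pe3 Y (T, X1, b) :=
      funext fun b => dB T X1 b
    rw [h1]
    exact (hasDerivAt_along hY3c (lineB T X1 X2)).deriv
  have dHt : ∀ (T X1 : ℝ), deriv (fun s => h s X1) T = pd pv1 H (T, X1) :=
    fun T X1 => (hasDerivAt_along hh (lineS X1 T)).deriv
  have dHx : ∀ (T X1 : ℝ), deriv (fun a => h T a) X1 = pd pv2 H (T, X1) :=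
    fun T X1 => (hasDerivAt_along hh (lineX T X1)).deriv
  have dHxx : ∀ (T X1 : ℝ),
      deriv (deriv (fun a => h T a)) X1 = pd pv2 (pd pv2 H) (T, X1) := by
    intro T X1
    have h1 : deriv (fun a => h T a) = fun a => pd pv2 H (T, a) := funext fun a => dHx T a
    rw [h1]
    exact (hasDerivAt_along hH2c (lineX T X1)).deriv
  -- translated structure equations (at time `t`)
  have heatP : ∀ (X1 X2 : ℝ), X2 ∈ Set.Icc (-1:ℝ) 1 →
      pd pe1 Y (t, X1, X2)
        = pd pe2 (pd pe2 Y) (t, X1, X2) + pd pe3 (pd pe3 Y) (t, X1, X2) := by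
    intro X1 X2 hX2
    have hq := heat t X1 X2 hX2
    rwa [dT, dAA, dBB] at hq
  have hstefanP : ∀ X1 : ℝ, pd pv1 H (t, X1) = pd pe3 Y (t, X1, 1) := by
    intro X1
    have hq := hstefan t X1
    rwa [dHt, dB] at hq
  have hgtP : ∀ X1 : ℝ, y t X1 1 = σ * pd pv2 (pd pv2 H) (t, X1) := by
    intro X1
    have hq := hgt t X1
    rwa [dHxx] at hq
  -- Part 1: differentiate the energy under the integral sign
  have hA : HasDerivAt
      (fun s => ∫ x₁ in (0:ℝ)..(2 * Real.pi), ∫ x₂ in (-1:ℝ)..1, (y s x₁ x₂)^2)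
      (∫ x₁ in (0:ℝ)..(2 * Real.pi), ∫ x₂ in (-1:ℝ)..1,
        2 * y t x₁ x₂ * pd pe1 Y (t, x₁, x₂)) t := by
    apply hasDerivAt_param_integral
      (F := fun s x₁ => ∫ x₂ in (-1:ℝ)..1, (y s x₁ x₂)^2)
      (F' := fun s x₁ => ∫ x₂ in (-1:ℝ)..1, 2 * y s x₁ x₂ * pd pe1 Y (s, x₁, x₂))
    · apply intervalIntegral.continuous_parametric_intervalIntegral_of_continuous'
        (f := fun (p : ℝ × ℝ) (x₂ : ℝ) => (y p.1 p.2 x₂)^2)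
      show Continuous fun q : (ℝ × ℝ) × ℝ => (Y (q.1.1, q.1.2, q.2))^2
      fun_prop
    · apply intervalIntegral.continuous_parametric_intervalIntegral_of_continuous'
        (f := fun (p : ℝ × ℝ) (x₂ : ℝ) => 2 * y p.1 p.2 x₂ * pd pe1 Y (p.1, p.2, x₂))
      show Continuous fun q : (ℝ × ℝ) × ℝ =>
        2 * Y (q.1.1, q.1.2, q.2) * pd pe1 Y (q.1.1, q.1.2, q.2)
      fun_prop
    · intro s x₁
      apply hasDerivAt_param_integral
        (F := fun u x₂ => (y u x₁ x₂)^2)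
        (F' := fun u x₂ => 2 * y u x₁ x₂ * pd pe1 Y (u, x₁, x₂))
      · show Continuous fun p : ℝ × ℝ => (Y (p.1, x₁, p.2))^2
        fun_prop
      · show Continuous fun p : ℝ × ℝ =>
          2 * Y (p.1, x₁, p.2) * pd pe1 Y (p.1, x₁, p.2)
        fun_prop
      · intro u x₂
        have h1 : HasDerivAt (fun v => y v x₁ x₂) (pd pe1 Y (u, x₁, x₂)) u :=
          hasDerivAt_along hy (lineT x₁ x₂ u)
        simpa using h1.fun_pow 2
  have hB : HasDerivAt
      (fun s => ∫ x₁ in (0:ℝ)..(2 * Real.pi), (deriv (fun a => h s a) x₁)^2)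
      (∫ x₁ in (0:ℝ)..(2 * Real.pi),
        2 * pd pv2 H (t, x₁) * pd pv1 (pd pv2 H) (t, x₁)) t := by
    have hfun : (fun s => ∫ x₁ in (0:ℝ)..(2 * Real.pi), (deriv (fun a => h s a) x₁)^2)
        = fun s => ∫ x₁ in (0:ℝ)..(2 * Real.pi), (pd pv2 H (s, x₁))^2 := by
      funext s
      apply intervalIntegral.integral_congr
      intro x₁ _
      simp only [dHx]
    rw [hfun]
    apply hasDerivAt_param_integral
      (F := fun s x₁ => (pd pv2 H (s, x₁))^2)
      (F' := fun s x₁ => 2 * pd pv2 H (s, x₁) * pd pv1 (pd pv2 H) (s, x₁))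
    · show Continuous fun p : ℝ × ℝ => (pd pv2 H (p.1, p.2))^2
      fun_prop
    · show Continuous fun p : ℝ × ℝ =>
        2 * pd pv2 H (p.1, p.2) * pd pv1 (pd pv2 H) (p.1, p.2)
      fun_prop
    · intro s x₁
      have h1 : HasDerivAt (fun u => pd pv2 H (u, x₁)) (pd pv1 (pd pv2 H) (s, x₁)) s :=
        hasDerivAt_along hH2c (lineS x₁ s)
      simpa using h1.fun_pow 2
  have hAB := hA.add (hB.const_mul σ)
  -- Part 2: identify the derivative.
  have hm1 : ((-1:ℝ)) ≤ 1 := by norm_num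
  -- integrability in x₂
  have iC : ∀ x₁ : ℝ, IntervalIntegrable
      (fun x₂ => (pd pe2 Y (t, x₁, x₂))^2) volume (-1) 1 := fun x₁ =>
    Continuous.intervalIntegrable (by fun_prop) _ _
  have iD : ∀ x₁ : ℝ, IntervalIntegrable
      (fun x₂ => (pd pe3 Y (t, x₁, x₂))^2) volume (-1) 1 := fun x₁ =>
    Continuous.intervalIntegrable (by fun_prop) _ _
  have iE : ∀ x₁ : ℝ, IntervalIntegrable
      (fun x₂ => y t x₁ x₂ * pd pe2 (pd pe2 Y) (t, x₁, x₂)) volume (-1) 1 := fun x₁ =>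
    Continuous.intervalIntegrable
      (by show Continuous fun x₂ : ℝ => Y (t, x₁, x₂) * pd pe2 (pd pe2 Y) (t, x₁, x₂); fun_prop) _ _
  have iA2 : ∀ x₁ : ℝ, IntervalIntegrable
      (fun x₂ => 2 * (y t x₁ x₂ * pd pe2 (pd pe2 Y) (t, x₁, x₂))) volume (-1) 1 := fun x₁ =>
    Continuous.intervalIntegrable
      (by show Continuous fun x₂ : ℝ => 2 * (Y (t, x₁, x₂) * pd pe2 (pd pe2 Y) (t, x₁, x₂)); fun_prop) _ _
  have iB2 : ∀ x₁ : ℝ, IntervalIntegrable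
      (fun x₂ => 2 * (y t x₁ x₂ * pd pe3 (pd pe3 Y) (t, x₁, x₂))) volume (-1) 1 := fun x₁ =>
    Continuous.intervalIntegrable
      (by show Continuous fun x₂ : ℝ => 2 * (Y (t, x₁, x₂) * pd pe3 (pd pe3 Y) (t, x₁, x₂)); fun_prop) _ _
  have iU : ∀ x₁ : ℝ, IntervalIntegrable
      (fun b => pd pe3 Y (t, x₁, b)) volume (-1) 1 := fun x₁ =>
    Continuous.intervalIntegrable (by fun_prop) _ _
  have iV : ∀ x₁ : ℝ, IntervalIntegrable
      (fun b => pd pe3 (pd pe3 Y) (t, x₁, b)) volume (-1) 1 := fun x₁ =>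
    Continuous.intervalIntegrable (by fun_prop) _ _
  -- continuity in x₁ of inner integrals
  have cI1 : Continuous fun x₁ : ℝ => ∫ x₂ in (-1:ℝ)..1,
      ((pd pe2 Y (t, x₁, x₂))^2 + y t x₁ x₂ * pd pe2 (pd pe2 Y) (t, x₁, x₂)) := by
    apply intervalIntegral.continuous_parametric_intervalIntegral_of_continuous'
      (f := fun (x₁ x₂ : ℝ) => (pd pe2 Y (t, x₁, x₂))^2 + y t x₁ x₂ * pd pe2 (pd pe2 Y) (t, x₁, x₂))
    show Continuous fun q : ℝ × ℝ =>
      (pd pe2 Y (t, q.1, q.2))^2 + Y (t, q.1, q.2) * pd pe2 (pd pe2 Y) (t, q.1, q.2)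
    fun_prop
  have cI2 : Continuous fun x₁ : ℝ => ∫ x₂ in (-1:ℝ)..1, (pd pe2 Y (t, x₁, x₂))^2 := by
    apply intervalIntegral.continuous_parametric_intervalIntegral_of_continuous'
      (f := fun (x₁ x₂ : ℝ) => (pd pe2 Y (t, x₁, x₂))^2)
    show Continuous fun q : ℝ × ℝ => (pd pe2 Y (t, q.1, q.2))^2
    fun_prop
  have cI3 : Continuous fun x₁ : ℝ => ∫ x₂ in (-1:ℝ)..1, (pd pe3 Y (t, x₁, x₂))^2 := by
    apply intervalIntegral.continuous_parametric_intervalIntegral_of_continuous'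
      (f := fun (x₁ x₂ : ℝ) => (pd pe3 Y (t, x₁, x₂))^2)
    show Continuous fun q : ℝ × ℝ => (pd pe3 Y (t, q.1, q.2))^2
    fun_prop
  have cG : Continuous fun x₁ : ℝ => pd pv2 (pd pv2 H) (t, x₁) * pd pv1 H (t, x₁) := by fun_prop
  have cG2 : Continuous fun x₁ : ℝ => pd pv2 H (t, x₁) * pd pv2 (pd pv1 H) (t, x₁) := by fun_prop
  -- FTC in the x₁ direction for the heat part
  have hΦ : ∀ a : ℝ, HasDerivAt
      (fun a' => ∫ x₂ in (-1:ℝ)..1, y t a' x₂ * pd pe2 Y (t, a', x₂))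
      (∫ x₂ in (-1:ℝ)..1,
        ((pd pe2 Y (t, a, x₂))^2 + y t a x₂ * pd pe2 (pd pe2 Y) (t, a, x₂))) a := by
    intro a
    apply hasDerivAt_param_integral
      (F := fun a' x₂ => y t a' x₂ * pd pe2 Y (t, a', x₂))
      (F' := fun a' x₂ => (pd pe2 Y (t, a', x₂))^2 + y t a' x₂ * pd pe2 (pd pe2 Y) (t, a', x₂))
    · show Continuous fun p : ℝ × ℝ => Y (t, p.1, p.2) * pd pe2 Y (t, p.1, p.2)
      fun_prop
    · show Continuous fun p : ℝ × ℝ =>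
        (pd pe2 Y (t, p.1, p.2))^2 + Y (t, p.1, p.2) * pd pe2 (pd pe2 Y) (t, p.1, p.2)
      fun_prop
    · intro s x₂
      have h1 : HasDerivAt (fun a' => y t a' x₂) (pd pe2 Y (t, s, x₂)) s :=
        hasDerivAt_along hy (lineA t x₂ s)
      have h2 : HasDerivAt (fun a' => pd pe2 Y (t, a', x₂)) (pd pe2 (pd pe2 Y) (t, s, x₂)) s :=
        hasDerivAt_along hY2c (lineA t x₂ s)
      have h3 := h1.fun_mul h2
      exact h3.congr_deriv (by ring)
  have ftcΦ : (∫ x₁ in (0:ℝ)..(2 * Real.pi), ∫ x₂ in (-1:ℝ)..1,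
      ((pd pe2 Y (t, x₁, x₂))^2 + y t x₁ x₂ * pd pe2 (pd pe2 Y) (t, x₁, x₂))) = 0 := by
    rw [intervalIntegral.integral_eq_sub_of_hasDerivAt (fun a _ => hΦ a)
      (cI1.intervalIntegrable 0 (2 * Real.pi))]
    show (∫ x₂ in (-1:ℝ)..1, y t (2 * Real.pi) x₂ * pd pe2 Y (t, 2 * Real.pi, x₂))
      - (∫ x₂ in (-1:ℝ)..1, y t 0 x₂ * pd pe2 Y (t, 0, x₂)) = 0
    have hcong : (∫ x₂ in (-1:ℝ)..1, y t (2 * Real.pi) x₂ * pd pe2 Y (t, 2 * Real.pi, x₂))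
        = ∫ x₂ in (-1:ℝ)..1, y t 0 x₂ * pd pe2 Y (t, 0, x₂) := by
      apply intervalIntegral.integral_congr
      intro x₂ _
      have e1 : y t (2 * Real.pi) x₂ = y t 0 x₂ := by simpa using hyper t 0 x₂
      have e2 : pd pe2 Y (t, 2 * Real.pi, x₂) = pd pe2 Y (t, 0, x₂) := by
        rw [← dA, ← dA]
        have := deriv_periodic (f := fun a => y t a x₂) (fun x => hyper t x x₂) 0
        simpa using this
      show y t (2 * Real.pi) x₂ * pd pe2 Y (t, 2 * Real.pi, x₂)
        = y t 0 x₂ * pd pe2 Y (t, 0, x₂)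
      rw [e1, e2]
    rw [hcong, sub_self]
  -- FTC in the x₁ direction for the surface-tension part
  have hΨ : ∀ a : ℝ, HasDerivAt (fun a' => pd pv2 H (t, a') * pd pv1 H (t, a'))
      (pd pv2 (pd pv2 H) (t, a) * pd pv1 H (t, a)
        + pd pv2 H (t, a) * pd pv2 (pd pv1 H) (t, a)) a :=
    fun a => (hasDerivAt_along hH2c (lineX t a)).mul (hasDerivAt_along hH1c (lineX t a))
  have ftcΨ : (∫ x₁ in (0:ℝ)..(2 * Real.pi),
      (pd pv2 (pd pv2 H) (t, x₁) * pd pv1 H (t, x₁)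
        + pd pv2 H (t, x₁) * pd pv2 (pd pv1 H) (t, x₁))) = 0 := by
    rw [intervalIntegral.integral_eq_sub_of_hasDerivAt (fun a _ => hΨ a)
      (Continuous.intervalIntegrable (cG.add cG2) 0 (2 * Real.pi))]
    show pd pv2 H (t, 2 * Real.pi) * pd pv1 H (t, 2 * Real.pi)
      - pd pv2 H (t, 0) * pd pv1 H (t, 0) = 0
    have p2 : pd pv2 H (t, 2 * Real.pi) = pd pv2 H (t, 0) := by
      rw [← dHx, ← dHx]
      have := deriv_periodic (f := fun a => h t a) (fun x => hhper t x) 0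
      simpa using this
    have p1 : pd pv1 H (t, 2 * Real.pi) = pd pv1 H (t, 0) := by
      rw [← dHt, ← dHt]
      have e : (fun s => h s (2 * Real.pi)) = fun s => h s 0 :=
        funext fun s => by simpa using hhper s 0
      rw [e]
    rw [p1, p2, sub_self]
  -- pointwise identity in x₁
  have hP : ∀ x₁ : ℝ,
      (∫ x₂ in (-1:ℝ)..1, 2 * y t x₁ x₂ * pd pe1 Y (t, x₁, x₂))
        = 2 * (∫ x₂ in (-1:ℝ)..1,
            ((pd pe2 Y (t, x₁, x₂))^2 + y t x₁ x₂ * pd pe2 (pd pe2 Y) (t, x₁, x₂)))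
          - 2 * (∫ x₂ in (-1:ℝ)..1, (pd pe2 Y (t, x₁, x₂))^2)
          + 2 * σ * (pd pv2 (pd pv2 H) (t, x₁) * pd pv1 H (t, x₁))
          - 2 * (∫ x₂ in (-1:ℝ)..1, (pd pe3 Y (t, x₁, x₂))^2) := by
    intro x₁
    have hsplit : (∫ x₂ in (-1:ℝ)..1, 2 * y t x₁ x₂ * pd pe1 Y (t, x₁, x₂))
        = 2 * (∫ x₂ in (-1:ℝ)..1, y t x₁ x₂ * pd pe2 (pd pe2 Y) (t, x₁, x₂))
          + 2 * (∫ x₂ in (-1:ℝ)..1, y t x₁ x₂ * pd pe3 (pd pe3 Y) (t, x₁, x₂)) := by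
      calc (∫ x₂ in (-1:ℝ)..1, 2 * y t x₁ x₂ * pd pe1 Y (t, x₁, x₂))
          = ∫ x₂ in (-1:ℝ)..1, (2 * (y t x₁ x₂ * pd pe2 (pd pe2 Y) (t, x₁, x₂))
              + 2 * (y t x₁ x₂ * pd pe3 (pd pe3 Y) (t, x₁, x₂))) := by
            apply intervalIntegral.integral_congr
            intro x₂ hx₂
            rw [Set.uIcc_of_le hm1] at hx₂
            show 2 * y t x₁ x₂ * pd pe1 Y (t, x₁, x₂) = _
            rw [heatP x₁ x₂ hx₂]
            ring
        _ = (∫ x₂ in (-1:ℝ)..1, 2 * (y t x₁ x₂ * pd pe2 (pd pe2 Y) (t, x₁, x₂)))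
              + ∫ x₂ in (-1:ℝ)..1, 2 * (y t x₁ x₂ * pd pe3 (pd pe3 Y) (t, x₁, x₂)) :=
            intervalIntegral.integral_add (iA2 x₁) (iB2 x₁)
        _ = 2 * (∫ x₂ in (-1:ℝ)..1, y t x₁ x₂ * pd pe2 (pd pe2 Y) (t, x₁, x₂))
              + 2 * (∫ x₂ in (-1:ℝ)..1, y t x₁ x₂ * pd pe3 (pd pe3 Y) (t, x₁, x₂)) := by
            rw [intervalIntegral.integral_const_mul, intervalIntegral.integral_const_mul]
    have hibp : (∫ x₂ in (-1:ℝ)..1, y t x₁ x₂ * pd pe3 (pd pe3 Y) (t, x₁, x₂))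
        = σ * pd pv2 (pd pv2 H) (t, x₁) * pd pv1 H (t, x₁)
          - ∫ x₂ in (-1:ℝ)..1, (pd pe3 Y (t, x₁, x₂))^2 := by
      have h0 := intervalIntegral.integral_mul_deriv_eq_deriv_mul (a := (-1:ℝ)) (b := 1)
        (u := fun b => y t x₁ b) (u' := fun b => pd pe3 Y (t, x₁, b))
        (v := fun b => pd pe3 Y (t, x₁, b)) (v' := fun b => pd pe3 (pd pe3 Y) (t, x₁, b))
        (fun b _ => hasDerivAt_along hy (lineB t x₁ b))
        (fun b _ => hasDerivAt_along hY3c (lineB t x₁ b)) (iU x₁) (iV x₁)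
      have hsq : (∫ x₂ in (-1:ℝ)..1, pd pe3 Y (t, x₁, x₂) * pd pe3 Y (t, x₁, x₂))
          = ∫ x₂ in (-1:ℝ)..1, (pd pe3 Y (t, x₁, x₂))^2 := by
        apply intervalIntegral.integral_congr
        intro x₂ _
        show pd pe3 Y (t, x₁, x₂) * pd pe3 Y (t, x₁, x₂) = (pd pe3 Y (t, x₁, x₂))^2
        ring
      rw [hdir t x₁, hgtP x₁, ← hstefanP x₁, hsq] at h0
      rw [h0]
      ring
    have hadd : (∫ x₂ in (-1:ℝ)..1,
        ((pd pe2 Y (t, x₁, x₂))^2 + y t x₁ x₂ * pd pe2 (pd pe2 Y) (t, x₁, x₂)))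
        = (∫ x₂ in (-1:ℝ)..1, (pd pe2 Y (t, x₁, x₂))^2)
          + ∫ x₂ in (-1:ℝ)..1, y t x₁ x₂ * pd pe2 (pd pe2 Y) (t, x₁, x₂) :=
      intervalIntegral.integral_add (iC x₁) (iE x₁)
    rw [hsplit, hibp, hadd]
    ring
  -- integrability over [0, 2π]
  have kk1 : IntervalIntegrable (fun x₁ => 2 * (∫ x₂ in (-1:ℝ)..1,
      ((pd pe2 Y (t, x₁, x₂))^2 + y t x₁ x₂ * pd pe2 (pd pe2 Y) (t, x₁, x₂))))
      volume 0 (2 * Real.pi) := (continuous_const.mul cI1).intervalIntegrable _ _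
  have kk2 : IntervalIntegrable (fun x₁ => 2 * (∫ x₂ in (-1:ℝ)..1, (pd pe2 Y (t, x₁, x₂))^2))
      volume 0 (2 * Real.pi) := (continuous_const.mul cI2).intervalIntegrable _ _
  have kk3 : IntervalIntegrable (fun x₁ => 2 * σ * (pd pv2 (pd pv2 H) (t, x₁) * pd pv1 H (t, x₁)))
      volume 0 (2 * Real.pi) := (continuous_const.mul cG).intervalIntegrable _ _
  have kk4 : IntervalIntegrable (fun x₁ => 2 * (∫ x₂ in (-1:ℝ)..1, (pd pe3 Y (t, x₁, x₂))^2))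
      volume 0 (2 * Real.pi) := (continuous_const.mul cI3).intervalIntegrable _ _
  -- splitting DA
  have hDA : (∫ x₁ in (0:ℝ)..(2 * Real.pi), ∫ x₂ in (-1:ℝ)..1,
      2 * y t x₁ x₂ * pd pe1 Y (t, x₁, x₂))
      = 2 * (∫ x₁ in (0:ℝ)..(2 * Real.pi), ∫ x₂ in (-1:ℝ)..1,
          ((pd pe2 Y (t, x₁, x₂))^2 + y t x₁ x₂ * pd pe2 (pd pe2 Y) (t, x₁, x₂)))
        - 2 * (∫ x₁ in (0:ℝ)..(2 * Real.pi), ∫ x₂ in (-1:ℝ)..1, (pd pe2 Y (t, x₁, x₂))^2)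
        + 2 * σ * (∫ x₁ in (0:ℝ)..(2 * Real.pi), pd pv2 (pd pv2 H) (t, x₁) * pd pv1 H (t, x₁))
        - 2 * (∫ x₁ in (0:ℝ)..(2 * Real.pi), ∫ x₂ in (-1:ℝ)..1, (pd pe3 Y (t, x₁, x₂))^2) := by
    calc (∫ x₁ in (0:ℝ)..(2 * Real.pi), ∫ x₂ in (-1:ℝ)..1,
        2 * y t x₁ x₂ * pd pe1 Y (t, x₁, x₂))
        = ∫ x₁ in (0:ℝ)..(2 * Real.pi),
            (2 * (∫ x₂ in (-1:ℝ)..1,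
              ((pd pe2 Y (t, x₁, x₂))^2 + y t x₁ x₂ * pd pe2 (pd pe2 Y) (t, x₁, x₂)))
            - 2 * (∫ x₂ in (-1:ℝ)..1, (pd pe2 Y (t, x₁, x₂))^2)
            + 2 * σ * (pd pv2 (pd pv2 H) (t, x₁) * pd pv1 H (t, x₁))
            - 2 * (∫ x₂ in (-1:ℝ)..1, (pd pe3 Y (t, x₁, x₂))^2)) :=
          intervalIntegral.integral_congr fun x₁ _ => hP x₁
      _ = _ := by
          rw [intervalIntegral.integral_sub ((kk1.sub kk2).add kk3) kk4,
            intervalIntegral.integral_add (kk1.sub kk2) kk3,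
            intervalIntegral.integral_sub kk1 kk2,
            intervalIntegral.integral_const_mul, intervalIntegral.integral_const_mul,
            intervalIntegral.integral_const_mul, intervalIntegral.integral_const_mul]
  -- rewriting DB using Clairaut
  have hDB : (∫ x₁ in (0:ℝ)..(2 * Real.pi), 2 * pd pv2 H (t, x₁) * pd pv1 (pd pv2 H) (t, x₁))
      = 2 * ∫ x₁ in (0:ℝ)..(2 * Real.pi), pd pv2 H (t, x₁) * pd pv2 (pd pv1 H) (t, x₁) := by
    rw [← intervalIntegral.integral_const_mul]
    apply intervalIntegral.integral_congr
    intro x₁ _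
    show 2 * pd pv2 H (t, x₁) * pd pv1 (pd pv2 H) (t, x₁)
      = 2 * (pd pv2 H (t, x₁) * pd pv2 (pd pv1 H) (t, x₁))
    rw [pd_comm hh pv1 pv2 (t, x₁)]
    ring
  have hWW : (∫ x₁ in (0:ℝ)..(2 * Real.pi), pd pv2 (pd pv2 H) (t, x₁) * pd pv1 H (t, x₁))
      + (∫ x₁ in (0:ℝ)..(2 * Real.pi), pd pv2 H (t, x₁) * pd pv2 (pd pv1 H) (t, x₁)) = 0 := by
    rw [← intervalIntegral.integral_add (cG.intervalIntegrable _ _) (cG2.intervalIntegrable _ _)]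
    exact ftcΨ
  -- rewriting the target
  have htarget : (∫ x₁ in (0:ℝ)..(2 * Real.pi), ∫ x₂ in (-1:ℝ)..1,
      ((deriv (fun a => y t a x₂) x₁)^2 + (deriv (fun b => y t x₁ b) x₂)^2))
      = (∫ x₁ in (0:ℝ)..(2 * Real.pi), ∫ x₂ in (-1:ℝ)..1, (pd pe2 Y (t, x₁, x₂))^2)
        + ∫ x₁ in (0:ℝ)..(2 * Real.pi), ∫ x₂ in (-1:ℝ)..1, (pd pe3 Y (t, x₁, x₂))^2 := by
    rw [← intervalIntegral.integral_add (cI2.intervalIntegrable _ _) (cI3.intervalIntegrable _ _)]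
    apply intervalIntegral.integral_congr
    intro x₁ _
    show (∫ x₂ in (-1:ℝ)..1,
        ((deriv (fun a => y t a x₂) x₁)^2 + (deriv (fun b => y t x₁ b) x₂)^2))
      = (∫ x₂ in (-1:ℝ)..1, (pd pe2 Y (t, x₁, x₂))^2)
        + ∫ x₂ in (-1:ℝ)..1, (pd pe3 Y (t, x₁, x₂))^2
    rw [← intervalIntegral.integral_add (iC x₁) (iD x₁)]
    apply intervalIntegral.integral_congr
    intro x₂ _
    show (deriv (fun a => y t a x₂) x₁)^2 + (deriv (fun b => y t x₁ b) x₂)^2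
      = (pd pe2 Y (t, x₁, x₂))^2 + (pd pe3 Y (t, x₁, x₂))^2
    rw [dA, dB]
  -- final bookkeeping
  have heq : (∫ x₁ in (0:ℝ)..(2 * Real.pi), ∫ x₂ in (-1:ℝ)..1,
      2 * y t x₁ x₂ * pd pe1 Y (t, x₁, x₂))
      + σ * (∫ x₁ in (0:ℝ)..(2 * Real.pi),
          2 * pd pv2 H (t, x₁) * pd pv1 (pd pv2 H) (t, x₁))
      = -2 * ∫ x₁ in (0:ℝ)..(2 * Real.pi), ∫ x₂ in (-1:ℝ)..1,
          ((deriv (fun a => y t a x₂) x₁)^2 + (deriv (fun b => y t x₁ b) x₂)^2) := by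
    rw [htarget, hDA, hDB, ftcΦ]
    linear_combination (2 * σ) * hWW
  exact heq ▸ hAB
end

section
/- Let λ ∈ ℝ, let φ : ℝ → ℝ be twice continuously differentiable on [−1, 1], and let ℓ ∈ ℝ, with φ not identically zero on [−1, 1] or ℓ ≠ 0. Suppose λ·φ(x) − φ''(x) = 0 for all x ∈ [−1, 1], λ·ℓ = φ'(1), and φ(−1) = φ(1) = 0. Then λ ≤ 0. (This expresses that the spectrum of the zeroth-mode operator A₀ is contained in (−∞, 0].) -/
open Set

/-- The spectrum of the zeroth-mode operator `A₀` is contained in `(-∞, 0]`: if `(φ, ℓ)` is a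
nontrivial solution of `λ·φ - φ'' = 0` on `[-1,1]`, `λ·ℓ = φ'(1)`, `φ(-1) = φ(1) = 0`, then
`λ ≤ 0`. -/
theorem stmt16 (lam : ℝ) (φ φ' φ'' : ℝ → ℝ) (ℓ : ℝ)
    (hφ' : ∀ x ∈ Icc (-1:ℝ) 1, HasDerivWithinAt φ (φ' x) (Icc (-1:ℝ) 1) x)
    (hφ'' : ∀ x ∈ Icc (-1:ℝ) 1, HasDerivWithinAt φ' (φ'' x) (Icc (-1:ℝ) 1) x)
    (hcont : ContinuousOn φ'' (Icc (-1:ℝ) 1))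
    (hnontriv : (¬ ∀ x ∈ Icc (-1:ℝ) 1, φ x = 0) ∨ ℓ ≠ 0)
    (heq : ∀ x ∈ Icc (-1:ℝ) 1, lam * φ x - φ'' x = 0)
    (hbc : lam * ℓ = φ' 1)
    (hbot : φ (-1) = 0)
    (htop : φ 1 = 0) :
    lam ≤ 0 := by
  by_contra hlam
  push_neg at hlam
  have hab : (-1:ℝ) ≤ 1 := by norm_num
  have hmem1 : (1:ℝ) ∈ Icc (-1:ℝ) 1 := by constructor <;> norm_num
  have hφcont : ContinuousOn φ (Icc (-1:ℝ) 1) := fun x hx => (hφ' x hx).continuousWithinAt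
  have hφ'cont : ContinuousOn φ' (Icc (-1:ℝ) 1) := fun x hx => (hφ'' x hx).continuousWithinAt
  set f : ℝ → ℝ := fun x => φ' x ^ 2 + lam * φ x ^ 2 with hf
  have hfcont : ContinuousOn f (Icc (-1:ℝ) 1) := by
    exact (hφ'cont.pow 2).add (continuousOn_const.mul (hφcont.pow 2))
  have hgderiv : ∀ x ∈ Ioo (-1:ℝ) 1,
      HasDerivWithinAt (fun x => φ x * φ' x) (f x) (Ioi x) x := by
    intro x hx
    have hxm : x ∈ Icc (-1:ℝ) 1 := Ioo_subset_Icc_self hx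
    have hnbd : Icc (-1:ℝ) 1 ∈ nhds x := Icc_mem_nhds hx.1 hx.2
    have h1 : HasDerivAt φ (φ' x) x := (hφ' x hxm).hasDerivAt hnbd
    have h2 : HasDerivAt φ' (φ'' x) x := (hφ'' x hxm).hasDerivAt hnbd
    have h3 : HasDerivAt (fun x => φ x * φ' x) (φ' x * φ' x + φ x * φ'' x) x := h1.mul h2
    have h4 : φ'' x = lam * φ x := by have := heq x hxm; linarith
    have : φ' x * φ' x + φ x * φ'' x = f x := by rw [h4, hf]; ring
    exact (this ▸ h3).hasDerivWithinAt
  have hgcont : ContinuousOn (fun x => φ x * φ' x) (Icc (-1:ℝ) 1) := hφcont.mul hφ'cont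
  have hfint : IntervalIntegrable f MeasureTheory.volume (-1) 1 :=
    (hfcont.mono (by rw [uIcc_of_le hab])).intervalIntegrable
  have hI : ∫ y in (-1:ℝ)..1, f y = 0 := by
    rw [intervalIntegral.integral_eq_sub_of_hasDeriv_right_of_le hab hgcont hgderiv hfint]
    simp [hbot, htop]
  have hnn : ∀ x ∈ Ioc (-1:ℝ) 1, 0 ≤ f x := by
    intro x hx
    exact add_nonneg (sq_nonneg _) (mul_nonneg hlam.le (sq_nonneg _))
  have hzero : ∀ c ∈ Icc (-1:ℝ) 1, f c = 0 := by
    intro c hc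
    by_contra hne
    have hpos : 0 < f c :=
      lt_of_le_of_ne (add_nonneg (sq_nonneg _) (mul_nonneg hlam.le (sq_nonneg _))) (Ne.symm hne)
    have := intervalIntegral.integral_pos (by norm_num : (-1:ℝ) < 1) hfcont hnn ⟨c, hc, hpos⟩
    linarith [hI ▸ this]
  have hφzero : ∀ x ∈ Icc (-1:ℝ) 1, φ x = 0 := by
    intro x hx
    have h := hzero x hx
    have h1 : 0 ≤ φ' x ^ 2 := sq_nonneg _
    have h2 : 0 ≤ lam * φ x ^ 2 := mul_nonneg hlam.le (sq_nonneg _)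
    have : lam * φ x ^ 2 = 0 := by rw [hf] at h; simp only at h; linarith
    have := (mul_eq_zero.1 this).resolve_left (ne_of_gt hlam)
    exact pow_eq_zero_iff (by norm_num) |>.1 this
  have hφ'zero : φ' 1 = 0 := by
    have h := hzero 1 hmem1
    have h2 : 0 ≤ lam * φ 1 ^ 2 := mul_nonneg hlam.le (sq_nonneg _)
    have : φ' 1 ^ 2 = 0 := by rw [hf] at h; simp only at h; nlinarith [sq_nonneg (φ' 1)]
    exact pow_eq_zero_iff (by norm_num) |>.1 this
  rcases hnontriv with h | h
  · exact h hφzero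
  · apply h
    have : lam * ℓ = 0 := by rw [hbc, hφ'zero]
    exact (mul_eq_zero.1 this).resolve_left (ne_of_gt hlam)
end

section
/- (Uniform weighted bound along the dyadic sequence) Let T > 0, q ∈ (1, 2^{1/4}), M > 0, β > M·q⁴/(2(q − 1)), and let α be a real number with β/2 < α < β/q⁴. Define ρ_α(t) = exp(−α/(T − t)²) and ρ₀(t) = M·exp( M/((q − 1)(T − t)) − β/(q⁴(T − t)²) ) for t ∈ [0, T), and set T_j = T·(1 − q^{−j}) for integers j ≥ 0. Then there exists a constant C > 0 such that for every integer j ≥ 1: ( sup_{t ∈ [T_j, T_{j+1}]} 1/ρ_α(t) + sup_{t ∈ [T_j, T_{j+1}]} |(d/dt)(1/ρ_α)(t)| )² · ρ₀(T_{j+1})² / (T − T_{j+1})⁶ ≤ C. -/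
/-- The weight `ρ_α(t) = exp(-α/(T-t)²)` used in the source term method. -/
noncomputable def rhoAlpha (T α : ℝ) (t : ℝ) : ℝ := Real.exp (-α / (T - t)^2)

/-- The weight `ρ₀(t) = M·exp(M/((q-1)(T-t)) - β/(q⁴(T-t)²))` used in the source term method. -/
noncomputable def rhoZero (T q M β : ℝ) (t : ℝ) : ℝ :=
  M * Real.exp (M / ((q - 1) * (T - t)) - β / (q^4 * (T - t)^2))

/-- The dyadic-type time sequence `T_j = T(1 - q^{-j})`. -/
noncomputable def Tdyad (T q : ℝ) (j : ℕ) : ℝ := T * (1 - (q^j)⁻¹)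

/-!
On `[T_j, T_{j+1}]` we have `T - t ≥ T - T_{j+1} = 1/x_j` with `x_j = q^{j+1}/T`, so `1/ρ_α`
and its derivative `2α/(T-t)³ · exp(α/(T-t)²)` are at most `exp(α x_j²)` and
`2α x_j³ exp(α x_j²)`. The weighted quantity is then at most
`(M (1 + 2α x³) x³ exp(M x/(q-1) - (β/q⁴ - α) x²))²` at `x = x_j`. Since `α < β/q⁴` the
Gaussian factor wins, so this tends to `0` as `x_j → ∞`, and a convergent sequence is bounded.
-/

open Filter Real Set Topology

theorem tendsto_pow_mul_exp_sub_mul_sq_atTop (n : ℕ) (a : ℝ) {b : ℝ} (hb : 0 < b) :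
    Tendsto (fun x => x ^ n * exp (a * x - b * x ^ 2)) atTop (𝓝 0) := by
  have hlarge : ∀ᶠ x in atTop, 0 ≤ x ∧ a * x - b * x ^ 2 ≤ -x := by
    filter_upwards [eventually_ge_atTop (max 0 ((a + 1) / b))] with x hx
    have hx0 : 0 ≤ x := le_of_max_le_left hx
    have hax : a + 1 ≤ b * x := (div_le_iff₀' hb).1 (le_of_max_le_right hx)
    exact ⟨hx0, by nlinarith⟩
  refine squeeze_zero' (hlarge.mono fun x hx => ?_) (hlarge.mono fun x hx => ?_)
    (tendsto_pow_mul_exp_neg_atTop_nhds_zero n)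
  · exact mul_nonneg (pow_nonneg hx.1 n) (exp_pos _).le
  · exact mul_le_mul_of_nonneg_left (exp_le_exp.2 hx.2) (pow_nonneg hx.1 n)

theorem div_pow_le_mul_pow_of_inv_le {c d x : ℝ} (hc : 0 ≤ c) (hx : 0 < x) (hd : x⁻¹ ≤ d)
    (n : ℕ) : c / d ^ n ≤ c * x ^ n := by
  have hd0 : 0 < d := (inv_pos.2 hx).trans_le hd
  rw [div_eq_mul_inv, ← inv_pow]
  gcongr
  exact inv_le_of_inv_le₀ hx hd

/-- The paper's `W^{1,∞}(a,b)`-norm, written for positive `f` (no absolute value on `f`). -/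
noncomputable def w1InftyNorm (f : ℝ → ℝ) (a b : ℝ) : ℝ :=
  sSup (f '' Icc a b) + sSup ((fun t => |deriv f t|) '' Icc a b)

section W1InftyNorm

variable {f : ℝ → ℝ} {a b : ℝ}

theorem w1InftyNorm_nonneg (hf : ∀ t ∈ Icc a b, 0 ≤ f t) : 0 ≤ w1InftyNorm f a b := by
  refine add_nonneg (Real.sSup_nonneg ?_) (Real.sSup_nonneg ?_)
  · rintro _ ⟨t, ht, rfl⟩
    exact hf t ht
  · rintro _ ⟨t, -, rfl⟩
    exact abs_nonneg _

theorem w1InftyNorm_le {A B : ℝ} (hA : 0 ≤ A) (hB : 0 ≤ B) (hf : ∀ t ∈ Icc a b, f t ≤ A)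
    (hf' : ∀ t ∈ Icc a b, |deriv f t| ≤ B) : w1InftyNorm f a b ≤ A + B := by
  refine add_le_add (Real.sSup_le ?_ hA) (Real.sSup_le ?_ hB)
  · rintro _ ⟨t, ht, rfl⟩
    exact hf t ht
  · rintro _ ⟨t, ht, rfl⟩
    exact hf' t ht

end W1InftyNorm

section Weights

variable {T q M β α : ℝ}

theorem one_div_rhoAlpha (T α t : ℝ) : 1 / rhoAlpha T α t = exp (α / (T - t) ^ 2) := by
  rw [rhoAlpha, one_div, ← exp_neg, neg_div, neg_neg]

theorem hasDerivAt_one_div_rhoAlpha {t : ℝ} (ht : t ≠ T) :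
    HasDerivAt (fun s => 1 / rhoAlpha T α s)
      (2 * α / (T - t) ^ 3 * exp (α / (T - t) ^ 2)) t := by
  have hTt : T - t ≠ 0 := sub_ne_zero.2 ht.symm
  have hsub : HasDerivAt (fun s => T - s) (-1) t := by
    simpa using (hasDerivAt_id t).const_sub T
  have := ((hsub.pow 2).inv (pow_ne_zero 2 hTt)).const_mul α |>.exp
  simp only [Pi.inv_apply, Pi.pow_apply, ← div_eq_mul_inv] at this
  convert this using 1
  · funext s
    rw [one_div_rhoAlpha]
  · field_simp
    ring

theorem sub_Tdyad (T q : ℝ) (j : ℕ) : T - Tdyad T q j = (q ^ j / T)⁻¹ := by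
  rw [Tdyad, inv_div]
  ring

theorem rhoZero_eq_of_sub_eq_inv {t x : ℝ} (ht : T - t = x⁻¹) :
    rhoZero T q M β t = M * exp (M / (q - 1) * x - β / q ^ 4 * x ^ 2) := by
  rw [rhoZero, ht]
  congr 2
  field_simp

theorem one_div_rhoAlpha_le (hα : 0 ≤ α) {t x : ℝ} (hx : 0 < x) (ht : x⁻¹ ≤ T - t) :
    1 / rhoAlpha T α t ≤ exp (α * x ^ 2) := by
  rw [one_div_rhoAlpha]
  exact exp_le_exp.2 (div_pow_le_mul_pow_of_inv_le hα hx ht 2)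

theorem abs_deriv_one_div_rhoAlpha_le (hα : 0 ≤ α) {t x : ℝ} (hx : 0 < x)
    (ht : x⁻¹ ≤ T - t) :
    |deriv (fun s => 1 / rhoAlpha T α s) t| ≤ 2 * α * x ^ 3 * exp (α * x ^ 2) := by
  have hTt : 0 < T - t := (inv_pos.2 hx).trans_le ht
  rw [(hasDerivAt_one_div_rhoAlpha (sub_pos.1 hTt).ne).deriv, abs_of_nonneg (by positivity)]
  exact mul_le_mul (div_pow_le_mul_pow_of_inv_le (by positivity) hx ht 3)
    (exp_le_exp.2 (div_pow_le_mul_pow_of_inv_le hα hx ht 2)) (exp_pos _).le (by positivity)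

theorem w1InftyNorm_sq_mul_rhoZero_sq_div_le (hα : 0 ≤ α) {a b x : ℝ} (hx : 0 < x)
    (hb : T - b = x⁻¹) :
    w1InftyNorm (fun t => 1 / rhoAlpha T α t) a b ^ 2 * rhoZero T q M β b ^ 2 / (T - b) ^ 6 ≤
      (M * (1 + 2 * α * x ^ 3) * x ^ 3 *
        exp (M / (q - 1) * x - (β / q ^ 4 - α) * x ^ 2)) ^ 2 := by
  have hIcc : ∀ t ∈ Icc a b, x⁻¹ ≤ T - t := fun t ht => by linarith [ht.2]
  have hnorm : w1InftyNorm (fun t => 1 / rhoAlpha T α t) a b ≤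
      (1 + 2 * α * x ^ 3) * exp (α * x ^ 2) := by
    rw [add_mul, one_mul]
    exact w1InftyNorm_le (exp_pos _).le (by positivity)
      (fun t ht => one_div_rhoAlpha_le hα hx (hIcc t ht))
      (fun t ht => abs_deriv_one_div_rhoAlpha_le hα hx (hIcc t ht))
  have hnonneg : 0 ≤ w1InftyNorm (fun t => 1 / rhoAlpha T α t) a b :=
    w1InftyNorm_nonneg fun t _ => by simp only [one_div_rhoAlpha]; positivity
  have hexp : exp (α * x ^ 2) * exp (M / (q - 1) * x - β / q ^ 4 * x ^ 2) =
      exp (M / (q - 1) * x - (β / q ^ 4 - α) * x ^ 2) := by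
    rw [← exp_add]
    ring_nf
  calc _ ≤ ((1 + 2 * α * x ^ 3) * exp (α * x ^ 2)) ^ 2 *
        rhoZero T q M β b ^ 2 / (T - b) ^ 6 := by gcongr
    _ = _ := by
      rw [rhoZero_eq_of_sub_eq_inv hb, hb, ← hexp]
      field_simp

end Weights

theorem stmt19_general (T q M β α : ℝ) (hT : 0 < T) (hq1 : 1 < q)
    (hM : 0 < M) (hβ : M * q^4 / (2 * (q - 1)) < β) (hα1 : β / 2 < α) (hα2 : α < β / q^4) :
    ∃ C > (0:ℝ), ∀ j : ℕ, 1 ≤ j →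
      (sSup ((fun t => 1 / rhoAlpha T α t) '' Set.Icc (Tdyad T q j) (Tdyad T q (j + 1))) +
        sSup ((fun t => |deriv (fun s => 1 / rhoAlpha T α s) t|) ''
          Set.Icc (Tdyad T q j) (Tdyad T q (j + 1))))^2
        * rhoZero T q M β (Tdyad T q (j + 1))^2 / (T - Tdyad T q (j + 1))^6 ≤ C := by
  have hβ0 : 0 < β := lt_trans (by have := sub_pos.2 hq1; positivity) hβ
  have hα0 : 0 ≤ α := by linarith
  have hbound : Tendsto (fun x => (M * (1 + 2 * α * x ^ 3) * x ^ 3 *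
      exp (M / (q - 1) * x - (β / q ^ 4 - α) * x ^ 2)) ^ 2) atTop (𝓝 0) := by
    have hgap : 0 < β / q ^ 4 - α := sub_pos.2 hα2
    have h3 := tendsto_pow_mul_exp_sub_mul_sq_atTop 3 (M / (q - 1)) hgap
    have h6 := tendsto_pow_mul_exp_sub_mul_sq_atTop 6 (M / (q - 1)) hgap
    have := ((h3.add (h6.const_mul (2 * α))).const_mul M).pow 2
    rw [mul_zero, add_zero, mul_zero, zero_pow two_ne_zero] at this
    exact this.congr fun x => by ring
  have hx : Tendsto (fun j : ℕ => q ^ (j + 1) / T) atTop atTop :=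
    ((tendsto_pow_atTop_atTop_of_one_lt hq1).comp (tendsto_add_atTop_nat 1)).atTop_div_const hT
  obtain ⟨C, hC⟩ := (hbound.comp hx).bddAbove_range
  refine ⟨max C 1, by positivity, fun j _ => ?_⟩
  calc _ ≤ _ := w1InftyNorm_sq_mul_rhoZero_sq_div_le hα0
          (div_pos (pow_pos (zero_lt_one.trans hq1) _) hT) (sub_Tdyad T q (j + 1))
    _ ≤ C := hC ⟨j, rfl⟩
    _ ≤ max C 1 := le_max_left _ _

/-- Uniform weighted bound along the dyadic sequence: under the standing assumptions on
`T, q, M, β, α`, there exists a constant `C > 0` such that for every `j ≥ 1`, the square of the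
`W^{1,∞}(T_j, T_{j+1})`-norm of `1/ρ_α`, weighted by `ρ₀(T_{j+1})²/(T - T_{j+1})⁶`, is at most
`C`. -/
theorem stmt19 (T q M β α : ℝ) (hT : 0 < T) (hq1 : 1 < q) (hq2 : q < (2:ℝ) ^ ((1:ℝ)/4))
    (hM : 0 < M) (hβ : M * q^4 / (2 * (q - 1)) < β) (hα1 : β / 2 < α) (hα2 : α < β / q^4) :
    ∃ C > (0:ℝ), ∀ j : ℕ, 1 ≤ j →
      (sSup ((fun t => 1 / rhoAlpha T α t) '' Set.Icc (Tdyad T q j) (Tdyad T q (j + 1))) +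
        sSup ((fun t => |deriv (fun s => 1 / rhoAlpha T α s) t|) ''
          Set.Icc (Tdyad T q j) (Tdyad T q (j + 1))))^2
        * rhoZero T q M β (Tdyad T q (j + 1))^2 / (T - Tdyad T q (j + 1))^6 ≤ C :=
  stmt19_general T q M β α hT hq1 hM hβ hα1 hα2
end
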